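/- arXiv:2503.17740 — 9 statements merged into one kernel-verified Lean document; each statement's English description precedes it below -/
import Mathlib

section
/- If Z ⊂ ℝ^d is a nonempty, convex, closed cone, then the gradient of F(x) = dist(x, Z)^2 at any x ∈ ℝ^d equals 2 π_{Z°}(x), where Z° is the polar cone of Z. -/
open Metric

noncomputable section

/-- `p` is the Euclidean (metric) projection onto `Z`. -/
def IsProjOn {d : ℕ} (Z : Set (EuclideanSpace ℝ (Fin d)))
    (p : EuclideanSpace ℝ (Fin d) → EuclideanSpace ℝ (Fin d)) : Prop :=
  ∀ x, p x ∈ Z ∧ ∀ v ∈ Z, dist x (p x) ≤ dist x v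

/-- The polar cone of `Z`. -/
def polarCone {d : ℕ} (Z : Set (EuclideanSpace ℝ (Fin d))) : Set (EuclideanSpace ℝ (Fin d)) :=
  {y | ∀ z ∈ Z, (inner ℝ y z : ℝ) ≤ 0}

open RealInnerProductSpace in
/-- Minimality over a convex set implies the variational inequality. -/
lemma var_of_min {d : ℕ} {K : Set (EuclideanSpace ℝ (Fin d))} (hK : Convex ℝ K)
    {x p : EuclideanSpace ℝ (Fin d)} (hp : p ∈ K)
    (hmin : ∀ w ∈ K, dist x p ≤ dist x w) :
    ∀ w ∈ K, ⟪x - p, w - p⟫ ≤ 0 := by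
  intro w hw
  by_contra h
  push_neg at h
  set I := ⟪x - p, w - p⟫ with hI
  have hwp : w ≠ p := by
    intro he; rw [he] at hI; simp [hI] at h
  have hC : (0:ℝ) < ‖w - p‖ ^ 2 :=
    pow_pos (norm_pos_iff.2 (sub_ne_zero.2 hwp)) 2
  set C := ‖w - p‖ ^ 2 with hCdef
  set t : ℝ := min 1 (I / C) with ht
  have ht0 : 0 < t := lt_min one_pos (div_pos h hC)
  have ht1 : t ≤ 1 := min_le_left _ _
  have hz : (1 - t) • p + t • w ∈ K := hK hp hw (by linarith) (le_of_lt ht0) (by ring)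
  have hd := hmin _ hz
  rw [dist_eq_norm, dist_eq_norm] at hd
  have hrw : x - ((1 - t) • p + t • w) = (x - p) - t • (w - p) := by
    module
  have hexp : ‖x - ((1 - t) • p + t • w)‖ ^ 2
      = ‖x - p‖ ^ 2 - 2 * t * I + t ^ 2 * C := by
    rw [hrw, norm_sub_sq_real, real_inner_smul_right, norm_smul, mul_pow]
    simp [hI, hCdef]
    ring
  have hsq : ‖x - p‖ ^ 2 ≤ ‖x - ((1 - t) • p + t • w)‖ ^ 2 := by
    have := norm_nonneg (x - ((1 - t) • p + t • w))
    nlinarith [norm_nonneg (x - p)]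
  rw [hexp] at hsq
  have h2 : 2 * I ≤ t * C := by
    have ht0' := ht0
    nlinarith
  have h3 : t * C ≤ I := by
    have : t ≤ I / C := min_le_right _ _
    calc t * C ≤ (I / C) * C := by nlinarith
    _ = I := by field_simp
  linarith

open RealInnerProductSpace in
/-- The variational inequality implies minimality. -/
lemma min_of_var {d : ℕ} {K : Set (EuclideanSpace ℝ (Fin d))}
    {x p : EuclideanSpace ℝ (Fin d)}
    (hvar : ∀ w ∈ K, ⟪x - p, w - p⟫ ≤ 0) :
    ∀ w ∈ K, dist x p ≤ dist x w := by
  intro w hw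
  rw [dist_eq_norm, dist_eq_norm]
  have hrw : x - w = (x - p) - (w - p) := by abel
  have hexp : ‖x - w‖ ^ 2 = ‖x - p‖ ^ 2 - 2 * ⟪x - p, w - p⟫ + ‖w - p‖ ^ 2 := by
    rw [hrw, norm_sub_sq_real]
  have h1 := hvar w hw
  have h2 : ‖x - p‖ ^ 2 ≤ ‖x - w‖ ^ 2 := by nlinarith [sq_nonneg ‖w - p‖]
  nlinarith [norm_nonneg (x - p), norm_nonneg (x - w)]

open RealInnerProductSpace in
/-- For a nonempty closed convex cone `Z`, the gradient of `x ↦ dist(x,Z)^2` at `x`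
equals `2 π_{Z°} x`. -/
theorem stmt3 {d : ℕ} (Z : Set (EuclideanSpace ℝ (Fin d)))
    (hne : Z.Nonempty) (hconv : Convex ℝ Z) (hcl : IsClosed Z)
    (hcone : ∀ x ∈ Z, ∀ s : ℝ, 0 < s → s • x ∈ Z)
    (pP : EuclideanSpace ℝ (Fin d) → EuclideanSpace ℝ (Fin d))
    (hpP : IsProjOn (polarCone Z) pP) :
    ∀ x : EuclideanSpace ℝ (Fin d),
      HasGradientAt (fun x : EuclideanSpace ℝ (Fin d) => (Metric.infDist x Z) ^ 2)
        ((2 : ℝ) • pP x) x := by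
  -- existence of the projection onto Z with variational characterization
  have hex : ∀ y : EuclideanSpace ℝ (Fin d),
      ∃ p, p ∈ Z ∧ ∀ w ∈ Z, ⟪y - p, w - p⟫ ≤ 0 := by
    intro y
    obtain ⟨v, hvZ, hv⟩ :=
      exists_norm_eq_iInf_of_complete_convex hne hcl.isComplete hconv y
    exact ⟨v, hvZ, (norm_eq_iInf_iff_real_inner_le_zero hconv hvZ).1 hv⟩
  choose q hqZ hqvar using hex
  -- infDist equals the norm to the projection
  have hdist : ∀ y, infDist y Z = ‖y - q y‖ := by
    intro y
    refine le_antisymm ?_ ?_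
    · calc infDist y Z ≤ dist y (q y) := infDist_le_dist_of_mem (hqZ y)
      _ = ‖y - q y‖ := dist_eq_norm _ _
    · by_contra hlt
      push_neg at hlt
      obtain ⟨w, hw, hwd⟩ := (infDist_lt_iff hne).1 hlt
      have hm := min_of_var (hqvar y) w hw
      rw [dist_eq_norm y (q y)] at hm
      linarith
  -- orthogonality : ⟪y - q y, q y⟫ = 0
  have horth : ∀ y, ⟪y - q y, q y⟫ = 0 := by
    intro y
    have h2 := hqvar y ((2:ℝ) • q y) (hcone _ (hqZ y) 2 (by norm_num))
    have hh := hqvar y (((1:ℝ)/2) • q y) (hcone _ (hqZ y) (1/2) (by norm_num))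
    rw [show (2:ℝ) • q y - q y = q y by module, ] at h2
    rw [show ((1:ℝ)/2) • q y - q y = -(((1:ℝ)/2) • q y) by module,
      inner_neg_right, real_inner_smul_right] at hh
    linarith
  -- y - q y is in the polar cone
  have hmem : ∀ y, y - q y ∈ polarCone Z := by
    intro y v hv
    have := hqvar y v hv
    have h0 := horth y
    have : ⟪y - q y, v⟫ - ⟪y - q y, q y⟫ ≤ 0 := by
      rwa [← inner_sub_right]
    linarith
  -- the polar cone is convex
  have hpc : Convex ℝ (polarCone Z) := by
    intro a ha b hb s t hs ht hst z hz
    have h1 := ha z hz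
    have h2 := hb z hz
    have : (inner ℝ (s • a + t • b) z : ℝ) = s * inner ℝ a z + t * inner ℝ b z := by
      rw [inner_add_left, real_inner_smul_left, real_inner_smul_left]
    rw [this]
    nlinarith
  -- Moreau : pP y = y - q y
  have hMoreau : ∀ y, pP y = y - q y := by
    intro y
    have hvarP : ∀ w ∈ polarCone Z, ⟪y - pP y, w - pP y⟫ ≤ 0 :=
      var_of_min hpc (hpP y).1 (hpP y).2
    have hvarQ : ∀ w ∈ polarCone Z, ⟪y - (y - q y), w - (y - q y)⟫ ≤ 0 := by
      intro w hw
      rw [show y - (y - q y) = q y by abel]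
      have h1 : ⟪q y, w⟫ ≤ 0 := by
        have := hw (q y) (hqZ y)
        rwa [real_inner_comm]
      have h2 : ⟪q y, y - q y⟫ = 0 := by
        rw [real_inner_comm]; exact horth y
      rw [inner_sub_right]
      linarith
    have e1 := hvarP _ (hmem y)
    have e2 := hvarQ _ (hpP y).1
    have key : ‖(y - q y) - pP y‖ ^ 2 ≤ 0 := by
      have hsum : ⟪y - pP y, (y - q y) - pP y⟫ + ⟪y - (y - q y), pP y - (y - q y)⟫ ≤ 0 :=
        add_nonpos e1 e2
      have : ⟪(y - q y) - pP y, (y - q y) - pP y⟫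
          = ⟪y - pP y, (y - q y) - pP y⟫ + ⟪y - (y - q y), pP y - (y - q y)⟫ := by
        simp only [inner_sub_left, inner_sub_right]
        linarith [real_inner_comm y (q y), real_inner_comm y (pP y),
          real_inner_comm (q y) (pP y)]
      rw [← real_inner_self_eq_norm_sq, this]
      exact hsum
    have : (y - q y) - pP y = 0 := by
      have := sq_nonneg ‖(y - q y) - pP y‖
      have h0 : ‖(y - q y) - pP y‖ = 0 := by nlinarith [norm_nonneg ((y - q y) - pP y)]
      exact norm_eq_zero.1 h0
    have := sub_eq_zero.1 this
    exact this.symm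
  -- q is 1-Lipschitz
  have hLip : ∀ x y, ‖q y - q x‖ ≤ ‖y - x‖ := by
    intro x y
    have h1 := hqvar x (q y) (hqZ y)
    have h2 := hqvar y (q x) (hqZ x)
    have hsum : ⟪x - q x, q y - q x⟫ + ⟪y - q y, q x - q y⟫ ≤ 0 := add_nonpos h1 h2
    have hkey : ‖q y - q x‖ ^ 2 ≤ ⟪y - x, q y - q x⟫ := by
      have : ⟪q y - q x, q y - q x⟫ - ⟪y - x, q y - q x⟫
          = ⟪x - q x, q y - q x⟫ + ⟪y - q y, q x - q y⟫ := by
        simp only [inner_sub_left, inner_sub_right]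
        linarith [real_inner_comm x (q x), real_inner_comm x (q y),
          real_inner_comm y (q x), real_inner_comm y (q y),
          real_inner_comm (q x) (q y), real_inner_comm x y]
      rw [← real_inner_self_eq_norm_sq]
      linarith
    have hcs : ⟪y - x, q y - q x⟫ ≤ ‖y - x‖ * ‖q y - q x‖ := real_inner_le_norm _ _
    nlinarith [norm_nonneg (q y - q x), norm_nonneg (y - x)]
  -- main gradient computation
  intro x
  rw [hasGradientAt_iff_hasFDerivAt, hasFDerivAt_iff_isLittleO_nhds_zero]
  have key : ∀ h : EuclideanSpace ℝ (Fin d),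
      |infDist (x + h) Z ^ 2 - infDist x Z ^ 2 - ⟪(2:ℝ) • pP x, h⟫| ≤ 5 * ‖h‖ ^ 2 := by
    intro h
    set y := x + h with hy
    have hhd : y - x = h := by simp [hy]
    have hg : ⟪(2:ℝ) • pP x, h⟫ = 2 * ⟪x - q x, h⟫ := by
      rw [real_inner_smul_left, hMoreau x]
    -- upper bound
    have hub : infDist y Z ^ 2 ≤ infDist x Z ^ 2 + 2 * ⟪x - q x, h⟫ + ‖h‖ ^ 2 := by
      have h1 : infDist y Z ≤ ‖y - q x‖ := by
        calc infDist y Z ≤ dist y (q x) := infDist_le_dist_of_mem (hqZ x)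
        _ = ‖y - q x‖ := dist_eq_norm _ _
      have h2 : ‖y - q x‖ ^ 2 = ‖x - q x‖ ^ 2 + 2 * ⟪x - q x, h⟫ + ‖h‖ ^ 2 := by
        rw [show y - q x = (x - q x) + h by rw [hy]; abel, norm_add_sq_real]
      have h3 : infDist y Z ^ 2 ≤ ‖y - q x‖ ^ 2 := by
        nlinarith [infDist_nonneg (x := y) (s := Z), norm_nonneg (y - q x)]
      rw [hdist x]
      linarith [h3, h2.le]
    -- lower bound
    have hlb : infDist x Z ^ 2 ≤ infDist y Z ^ 2 - 2 * ⟪y - q y, h⟫ + ‖h‖ ^ 2 := by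
      have h1 : infDist x Z ≤ ‖x - q y‖ := by
        calc infDist x Z ≤ dist x (q y) := infDist_le_dist_of_mem (hqZ y)
        _ = ‖x - q y‖ := dist_eq_norm _ _
      have h2 : ‖x - q y‖ ^ 2 = ‖y - q y‖ ^ 2 - 2 * ⟪y - q y, h⟫ + ‖h‖ ^ 2 := by
        rw [show x - q y = (y - q y) + (-h) by rw [hy]; abel, norm_add_sq_real]
        rw [inner_neg_right]
        simp
        ring
      have h3 : infDist x Z ^ 2 ≤ ‖x - q y‖ ^ 2 := by
        nlinarith [infDist_nonneg (x := x) (s := Z), norm_nonneg (x - q y)]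
      rw [hdist y]
      linarith [h3, h2.le]
    -- compare inner products using Lipschitz
    have hcomp : |⟪y - q y, h⟫ - ⟪x - q x, h⟫| ≤ 2 * ‖h‖ ^ 2 := by
      have : ⟪y - q y, h⟫ - ⟪x - q x, h⟫ = ⟪(y - q y) - (x - q x), h⟫ := by
        simp [inner_sub_left]
      rw [this]
      have hb : ‖(y - q y) - (x - q x)‖ ≤ 2 * ‖h‖ := by
        have : (y - q y) - (x - q x) = h - (q y - q x) := by rw [hy]; abel
        rw [this]
        calc ‖h - (q y - q x)‖ ≤ ‖h‖ + ‖q y - q x‖ := norm_sub_le _ _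
        _ ≤ ‖h‖ + ‖y - x‖ := by linarith [hLip x y]
        _ = 2 * ‖h‖ := by rw [hhd]; ring
      calc |⟪(y - q y) - (x - q x), h⟫| ≤ ‖(y - q y) - (x - q x)‖ * ‖h‖ :=
        abs_real_inner_le_norm _ _
      _ ≤ (2 * ‖h‖) * ‖h‖ := by
          apply mul_le_mul_of_nonneg_right hb (norm_nonneg _)
      _ = 2 * ‖h‖ ^ 2 := by ring
    rw [hg]
    rw [abs_le]
    constructor
    · have habs := abs_le.1 hcomp
      nlinarith [habs.1, habs.2]
    · nlinarith [sq_nonneg ‖h‖]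
  -- conclude littleO
  have hbig : (fun h : EuclideanSpace ℝ (Fin d) =>
      infDist (x + h) Z ^ 2 - infDist x Z ^ 2 - (InnerProductSpace.toDual ℝ _ ((2:ℝ) • pP x)) h)
      =O[nhds 0] (fun h => ‖h‖ ^ 2) := by
    apply Asymptotics.IsBigO.of_bound 5
    filter_upwards with h
    simp only [InnerProductSpace.toDual_apply_apply, Real.norm_eq_abs,
      abs_of_nonneg (sq_nonneg ‖h‖)]
    exact key h
    
  have hlo : (fun h : EuclideanSpace ℝ (Fin d) => ‖h‖ ^ 2) =o[nhds 0]
      (fun h : EuclideanSpace ℝ (Fin d) => h) := by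
    rw [Asymptotics.isLittleO_iff]
    intro c hc
    filter_upwards [Metric.ball_mem_nhds (0 : EuclideanSpace ℝ (Fin d)) hc] with h hh
    rw [mem_ball_zero_iff] at hh
    have : ‖h‖ ^ 2 = ‖h‖ * ‖h‖ := sq ‖h‖
    rw [Real.norm_eq_abs, abs_of_nonneg (sq_nonneg ‖h‖), this]
    exact mul_le_mul_of_nonneg_right hh.le (norm_nonneg _)
  exact hbig.trans_isLittleO hlo
end
end

section
/- Let Z ⊂ ℝ^d be a nonempty convex polyhedron given by Z = {x : ⟨ν_i, x⟩ ≤ α_i ∀ i ∈ I}. For every x ∈ ℝ^d there exists ε > 0 such that for all z with |z| < ε, π_Z(x + z) = π_Z(x) + π_{𝒵(π_Z(x))}(x + z - π_Z(x)), where 𝒵(y) is the linearization cone of Z at y ∈ Z. -/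
open Metric Set

noncomputable section

section Aux

variable {E : Type*} [NormedAddCommGroup E] [InnerProductSpace ℝ E]

/-- Variational inequality for a metric projection minimizer. -/
lemma varineq_of_min {K : Set E} (hK : Convex ℝ K) {x u : E} (hu : u ∈ K)
    (hmin : ∀ v ∈ K, dist x u ≤ dist x v) :
    ∀ w ∈ K, (inner ℝ (x - u) (w - u) : ℝ) ≤ 0 := by
  haveI : Nonempty K := ⟨⟨u, hu⟩⟩
  rw [← norm_eq_iInf_iff_real_inner_le_zero hK hu]
  apply le_antisymm
  · exact le_ciInf fun w => by simpa [dist_eq_norm] using hmin w w.2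
  · have hbdd : BddBelow (Set.range fun w : K => ‖x - w‖) := by
      refine ⟨0, ?_⟩
      rintro a ⟨w, rfl⟩
      exact norm_nonneg _
    exact ciInf_le hbdd ⟨u, hu⟩

/-- Uniqueness from two variational inequalities. -/
lemma eq_of_varineq {K : Set E} {x u v : E} (hu : u ∈ K) (hv : v ∈ K)
    (h1 : ∀ w ∈ K, (inner ℝ (x - u) (w - u) : ℝ) ≤ 0)
    (h2 : ∀ w ∈ K, (inner ℝ (x - v) (w - v) : ℝ) ≤ 0) : u = v := by
  have a1 := h1 v hv
  have a2 := h2 u hu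
  have key : (inner ℝ (v - u) (v - u) : ℝ) ≤ 0 := by
    have e1 : (inner ℝ (x - u) (v - u) : ℝ) - (inner ℝ (x - v) (v - u) : ℝ)
        = inner ℝ (v - u) (v - u) := by
      rw [← inner_sub_left]
      congr 1
      abel
    have e2 : (inner ℝ (x - v) (u - v) : ℝ) = -(inner ℝ (x - v) (v - u) : ℝ) := by
      rw [← inner_neg_right]
      congr 1
      abel
    nlinarith [e1, e2]
  have : v - u = 0 := by
    have := real_inner_self_nonneg (x := v - u)
    have hnorm : (inner ℝ (v - u) (v - u) : ℝ) = 0 := le_antisymm key this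
    exact inner_self_eq_zero.mp hnorm
  have : v = u := by
    have := sub_eq_zero.mp this
    exact this
  exact this.symm

end Aux

/-- Local decomposition of the projection onto a convex polyhedron:
`π_Z(x + z) = π_Z(x) + π_{𝒵(π_Z x)}(x + z - π_Z x)` for all small `z`, where
`𝒵(y)` is the linearization cone of `Z` at `y`. -/
theorem stmt5 {d : ℕ} {I : Type*} [Fintype I]
    (ν : I → EuclideanSpace ℝ (Fin d)) (α : I → ℝ) (hν : ∀ i, ‖ν i‖ = 1)
    (Z : Set (EuclideanSpace ℝ (Fin d)))
    (hZ : Z = {x | ∀ i, (inner ℝ (ν i) x : ℝ) ≤ α i}) (hZne : Z.Nonempty)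
    (p : EuclideanSpace ℝ (Fin d) → EuclideanSpace ℝ (Fin d)) (hp : IsProjOn Z p)
    (x : EuclideanSpace ℝ (Fin d))
    (q : EuclideanSpace ℝ (Fin d) → EuclideanSpace ℝ (Fin d))
    (hq : IsProjOn
      {z | ∀ i, (inner ℝ (ν i) (p x) : ℝ) = α i → (inner ℝ (ν i) z : ℝ) ≤ 0} q) :
    ∃ ε > (0 : ℝ), ∀ z : EuclideanSpace ℝ (Fin d), ‖z‖ < ε →
      p (x + z) = p x + q (x + z - p x) := by
  classical
  set y := p x with hy_def
  set C : Set (EuclideanSpace ℝ (Fin d)) :=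
    {z | ∀ i, (inner ℝ (ν i) y : ℝ) = α i → (inner ℝ (ν i) z : ℝ) ≤ 0} with hC_def
  have hyZ : y ∈ Z := (hp x).1
  -- convexity of Z
  have hZconv : Convex ℝ Z := by
    rw [hZ]
    intro a ha b hb s t hs ht hst i
    have ha' := ha i
    have hb' := hb i
    simp only [Set.mem_setOf_eq, inner_add_right, real_inner_smul_right]
    have h1 := mul_le_mul_of_nonneg_left ha' hs
    have h2 := mul_le_mul_of_nonneg_left hb' ht
    have h3 : s * α i + t * α i = α i := by rw [← add_mul, hst, one_mul]
    linarith
  -- convexity of C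
  have hCconv : Convex ℝ C := by
    intro a ha b hb s t hs ht hst i hi
    have ha' := ha i hi
    have hb' := hb i hi
    simp only [Set.mem_setOf_eq, inner_add_right, real_inner_smul_right]
    have h1 := mul_le_mul_of_nonneg_left ha' hs
    have h2 := mul_le_mul_of_nonneg_left hb' ht
    nlinarith
  have h0C : (0 : EuclideanSpace ℝ (Fin d)) ∈ C := by
    intro i _
    simp
  -- Z ⊆ y + C
  have hZsub : ∀ w ∈ Z, w - y ∈ C := by
    intro w hw i hi
    have : (inner ℝ (ν i) w : ℝ) ≤ α i := by rw [hZ] at hw; exact hw i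
    rw [inner_sub_right, hi]
    linarith
  -- δ lemma: small elements of C translate into Z
  obtain ⟨δ, hδpos, hδ⟩ : ∃ δ > (0 : ℝ), ∀ u : EuclideanSpace ℝ (Fin d),
      ‖u‖ < δ → u ∈ C → y + u ∈ Z := by
    set U : Set (EuclideanSpace ℝ (Fin d)) :=
      ⋂ i, {u | (inner ℝ (ν i) y : ℝ) = α i ∨ (inner ℝ (ν i) (y + u) : ℝ) < α i} with hU_def
    have hUopen : IsOpen U := by
      apply isOpen_iInter_of_finite
      intro i
      by_cases hi : (inner ℝ (ν i) y : ℝ) = α i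
      · have : {u : EuclideanSpace ℝ (Fin d) |
            (inner ℝ (ν i) y : ℝ) = α i ∨ (inner ℝ (ν i) (y + u) : ℝ) < α i} = Set.univ := by
          ext u
          simp only [Set.mem_setOf_eq, Set.mem_univ, iff_true]
          exact Or.inl hi
        rw [this]; exact isOpen_univ
      · have : {u : EuclideanSpace ℝ (Fin d) |
            (inner ℝ (ν i) y : ℝ) = α i ∨ (inner ℝ (ν i) (y + u) : ℝ) < α i}
            = {u | (inner ℝ (ν i) (y + u) : ℝ) < α i} := by
          ext u
          simp only [Set.mem_setOf_eq]
          tauto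
        rw [this]
        have hcont : Continuous fun u : EuclideanSpace ℝ (Fin d) =>
            (inner ℝ (ν i) (y + u) : ℝ) :=
          (continuous_const.inner (continuous_const.add continuous_id))
        exact isOpen_lt hcont continuous_const
    have h0U : (0 : EuclideanSpace ℝ (Fin d)) ∈ U := by
      rw [hU_def]
      refine Set.mem_iInter.mpr fun i => ?_
      by_cases hi : (inner ℝ (ν i) y : ℝ) = α i
      · exact Or.inl hi
      · have : (inner ℝ (ν i) y : ℝ) ≤ α i := by rw [hZ] at hyZ; exact hyZ i
        simp only [Set.mem_setOf_eq, add_zero]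
        exact Or.inr (lt_of_le_of_ne this hi)
    obtain ⟨δ, hδpos, hball⟩ := Metric.isOpen_iff.mp hUopen 0 h0U
    refine ⟨δ, hδpos, fun u hu huC => ?_⟩
    have : u ∈ U := hball (by simpa [mem_ball, dist_eq_norm] using hu)
    rw [hZ]
    intro i
    have := Set.mem_iInter.mp this i
    rcases this with hact | hlt
    · have := huC i hact
      rw [inner_add_right, hact]
      linarith
    · exact le_of_lt hlt
  -- ⟪x - y, c⟫ ≤ 0 for c ∈ C
  have hxyC : ∀ c ∈ C, (inner ℝ (x - y) c : ℝ) ≤ 0 := by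
    intro c hc
    have hvar := varineq_of_min hZconv hyZ (hp x).2
    set t : ℝ := δ / (2 * (‖c‖ + 1)) with ht_def
    have hcnorm : (0 : ℝ) < ‖c‖ + 1 := by positivity
    have htpos : 0 < t := by positivity
    have htc : t • c ∈ C := by
      intro i hi
      have := hc i hi
      rw [real_inner_smul_right]
      nlinarith
    have htcnorm : ‖t • c‖ < δ := by
      rw [norm_smul, Real.norm_eq_abs, abs_of_pos htpos, ht_def]
      rw [div_mul_eq_mul_div, div_lt_iff₀ (by positivity)]
      nlinarith [norm_nonneg c]
    have hmem : y + t • c ∈ Z := hδ _ htcnorm htc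
    have := hvar _ hmem
    rw [add_sub_cancel_left, real_inner_smul_right] at this
    nlinarith
  -- the conclusion
  refine ⟨δ, hδpos, fun z hz => ?_⟩
  set w := x + z with hw_def
  set qv := q (w - y) with hqv_def
  have hqvC : qv ∈ C := (hq (w - y)).1
  have hqvar := varineq_of_min hCconv hqvC (hq (w - y)).2
  -- ‖qv‖ ≤ ‖z‖
  have hqvnorm : ‖qv‖ ≤ ‖z‖ := by
    have h1 := hqvar 0 h0C
    have h2 := hxyC qv hqvC
    -- h1 : ⟪(w - y) - qv, 0 - qv⟫ ≤ 0
    rw [zero_sub, inner_neg_right, inner_sub_left, neg_nonpos] at h1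
    -- so ⟪qv, qv⟫ ≤ ⟪w - y, qv⟫
    have hwy : w - y = (x - y) + z := by rw [hw_def]; abel
    have h3 : (inner ℝ (w - y) qv : ℝ) = inner ℝ (x - y) qv + inner ℝ z qv := by
      rw [hwy, inner_add_left]
    have h4 : (inner ℝ qv qv : ℝ) ≤ inner ℝ z qv := by
      have h2' : (inner ℝ (x - y) qv : ℝ) ≤ 0 := h2
      nlinarith [h1, h3]
    have h5 : (inner ℝ z qv : ℝ) ≤ ‖z‖ * ‖qv‖ := real_inner_le_norm z qv
    have h6 : (inner ℝ qv qv : ℝ) = ‖qv‖ ^ 2 := real_inner_self_eq_norm_sq qv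
    nlinarith [norm_nonneg qv, norm_nonneg z]
  set v := y + qv with hv_def
  have hvZ : v ∈ Z := hδ qv (lt_of_le_of_lt hqvnorm hz) hqvC
  -- variational inequality of v over Z w.r.t. w
  have hvarv : ∀ w' ∈ Z, (inner ℝ (w - v) (w' - v) : ℝ) ≤ 0 := by
    intro w' hw'
    have := hqvar (w' - y) (hZsub w' hw')
    have e1 : w - y - qv = w - v := by rw [hv_def]; abel
    have e2 : w' - y - qv = w' - v := by rw [hv_def]; abel
    rwa [e1, e2] at this
  have hvaru := varineq_of_min hZconv (hp w).1 (hp w).2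
  have := eq_of_varineq (hp w).1 hvZ hvaru hvarv
  rw [this, hv_def]
end
end

section
/- Let Z ⊂ ℝ^d be a full-dimensional convex polyhedron with standard (irredundant) description {(ν_i, α_i)}_{i∈I} that is non-obtuse, i.e., ⟨ν_i, ν_j⟩ ≤ 0 for all i ≠ j. Then the description is regular: for every x ∈ Z, the active normal vectors {ν_i : i ∈ 𝒜(x)} are linearly independent. -/
open Metric Set

noncomputable section

/-- A non-obtuse standard description of a full-dimensional convex polyhedron is regular:
at every point of `Z` the active normal vectors are linearly independent. -/
theorem stmt9 {d : ℕ} {I : Type*} [Fintype I]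
    (ν : I → EuclideanSpace ℝ (Fin d)) (α : I → ℝ) (hν : ∀ i, ‖ν i‖ = 1)
    (Z : Set (EuclideanSpace ℝ (Fin d)))
    (hZ : Z = {x | ∀ i, (inner ℝ (ν i) x : ℝ) ≤ α i})
    (hfull : (interior Z).Nonempty)
    (hstd : ∀ i, ∃ x ∈ Z, (inner ℝ (ν i) x : ℝ) = α i ∧
      ∀ j, j ≠ i → (inner ℝ (ν j) x : ℝ) < α j)
    (hobtuse : ∀ i j, i ≠ j → (inner ℝ (ν i) (ν j) : ℝ) ≤ 0) :
    ∀ x ∈ Z, LinearIndependent ℝ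
      (fun i : {i : I // (inner ℝ (ν i) x : ℝ) = α i} => ν i) := by
  classical
  intro x hx
  obtain ⟨x₀, hx₀⟩ := hfull
  have hx₀Z : ∀ j, (inner ℝ (ν j) x₀ : ℝ) ≤ α j := by
    have := interior_subset hx₀
    rw [hZ] at this; exact this
  have hstrict : ∀ i, (inner ℝ (ν i) x₀ : ℝ) < α i := by
    intro i
    rcases (hx₀Z i).lt_or_eq with h | h
    · exact h
    · exfalso
      obtain ⟨ε, hε, hball⟩ := Metric.isOpen_iff.mp isOpen_interior x₀ hx₀
      have hmem : x₀ + (ε/2) • ν i ∈ Z := interior_subset (hball (by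
        rw [mem_ball, dist_eq_norm]
        have : x₀ + (ε/2) • ν i - x₀ = (ε/2) • ν i := by abel
        rw [this, norm_smul, hν i, Real.norm_eq_abs, abs_of_pos (by linarith)]
        linarith))
      rw [hZ] at hmem
      have h2 := hmem i
      rw [inner_add_right, real_inner_smul_right, real_inner_self_eq_norm_sq, hν i] at h2
      nlinarith
  set w : EuclideanSpace ℝ (Fin d) := x₀ - x with hw
  have hwneg : ∀ i : I, (inner ℝ (ν i) x : ℝ) = α i → (inner ℝ (ν i) w : ℝ) < 0 := by
    intro i hi
    have h1 := hstrict i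
    rw [hw, inner_sub_right]
    linarith
  rw [Fintype.linearIndependent_iff]
  intro g hg
  set P := Finset.univ.filter (fun i : {i : I // (inner ℝ (ν i) x : ℝ) = α i} => 0 < g i) with hP
  set N := Finset.univ.filter (fun i : {i : I // (inner ℝ (ν i) x : ℝ) = α i} => g i < 0) with hN
  have hPN : Disjoint P N := by
    rw [Finset.disjoint_left]
    intro a haP haN
    rw [hP, Finset.mem_filter] at haP
    rw [hN, Finset.mem_filter] at haN
    linarith [haP.2, haN.2]
  have hsum0 : ∑ i ∈ P ∪ N, g i • ν ↑i = 0 := by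
    have heq : ∑ i ∈ P ∪ N, g i • ν ↑i = ∑ i ∈ Finset.univ, g i • ν ↑i := by
      apply Finset.sum_subset (Finset.subset_univ _)
      intro i _ hi
      rw [Finset.mem_union, hP, hN, Finset.mem_filter, Finset.mem_filter] at hi
      push_neg at hi
      have h1 := hi.1 (Finset.mem_univ i)
      have h2 := hi.2 (Finset.mem_univ i)
      have : g i = 0 := le_antisymm h1 h2
      rw [this, zero_smul]
    rw [heq]
    exact hg
  rw [Finset.sum_union hPN] at hsum0
  set u : EuclideanSpace ℝ (Fin d) := ∑ i ∈ P, g i • ν ↑i with hu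
  have huN : u = ∑ i ∈ N, (-g i) • ν ↑i := by
    have : ∑ i ∈ N, (-g i) • ν ↑i = -∑ i ∈ N, g i • ν ↑i := by
      rw [← Finset.sum_neg_distrib]
      congr 1; ext i; rw [neg_smul]
    rw [this, eq_neg_iff_add_eq_zero, hu]
    exact hsum0
  have huu : (inner ℝ u u : ℝ) ≤ 0 := by
    nth_rewrite 2 [huN]
    rw [hu, sum_inner]
    apply Finset.sum_nonpos
    intro i hiP
    rw [real_inner_smul_left, inner_sum]
    apply mul_nonpos_of_nonneg_of_nonpos
    · rw [hP, Finset.mem_filter] at hiP; linarith [hiP.2]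
    apply Finset.sum_nonpos
    intro j hjN
    rw [real_inner_smul_right]
    have hij : (i : I) ≠ (j : I) := by
      intro hc
      have : i = j := Subtype.ext hc
      exact (Finset.disjoint_left.mp hPN hiP (this ▸ hjN))
    rw [hP, Finset.mem_filter] at hiP
    rw [hN, Finset.mem_filter] at hjN
    have := hobtuse i j hij
    nlinarith [hiP.2, hjN.2]
  have hu0 : u = 0 := by
    have h1 : (inner ℝ u u : ℝ) = 0 := le_antisymm huu real_inner_self_nonneg
    exact inner_self_eq_zero.mp h1
  have hPempty : P = ∅ := by
    by_contra hne
    have hPne : P.Nonempty := Finset.nonempty_of_ne_empty hne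
    have h1 : (inner ℝ u w : ℝ) = 0 := by rw [hu0, inner_zero_left]
    rw [hu, sum_inner] at h1
    have h2 : ∑ i ∈ P, (inner ℝ (g i • ν ↑i) w : ℝ) < 0 := by
      apply Finset.sum_neg _ hPne
      intro i hiP
      rw [hP, Finset.mem_filter] at hiP
      rw [real_inner_smul_left]
      have := hwneg i i.2
      exact mul_neg_of_pos_of_neg hiP.2 this
    linarith
  have hNempty : N = ∅ := by
    by_contra hne
    have hNne : N.Nonempty := Finset.nonempty_of_ne_empty hne
    have h1 : (inner ℝ u w : ℝ) = 0 := by rw [hu0, inner_zero_left]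
    rw [huN, sum_inner] at h1
    have h2 : ∑ i ∈ N, (inner ℝ ((-g i) • ν ↑i) w : ℝ) < 0 := by
      apply Finset.sum_neg _ hNne
      intro i hiN
      rw [hN, Finset.mem_filter] at hiN
      rw [real_inner_smul_left]
      have := hwneg i i.2
      exact mul_neg_of_pos_of_neg (by linarith [hiN.2]) this
    linarith
  intro i
  have hiP : i ∉ P := by rw [hPempty]; exact Finset.notMem_empty i
  have hiN : i ∉ N := by rw [hNempty]; exact Finset.notMem_empty i
  rw [hP, Finset.mem_filter] at hiP
  rw [hN, Finset.mem_filter] at hiN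
  push_neg at hiP hiN
  have h1 := hiP (Finset.mem_univ i)
  have h2 := hiN (Finset.mem_univ i)
  linarith
end
end

section
/- Let Z ⊂ ℝ^d be a full-dimensional non-obtuse convex polyhedron with standard description {(ν_i, α_i)}_{i∈I}. If x, y ∈ Z, v ∈ ℝ^d, and x + v ∈ Z, then x + π_{𝒵(y)°}(v) ∈ Z, where 𝒵(y) is the linearization (tangent) cone of Z at y and 𝒵(y)° its polar cone. -/
open Metric Set

noncomputable section

/-- For a full-dimensional non-obtuse convex polyhedron `Z` with standard description:
if `x, y ∈ Z` and `x + v ∈ Z`, then `x + π_{𝒵(y)°}(v) ∈ Z`. -/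
theorem stmt10 {d : ℕ} {I : Type*} [Fintype I]
    (ν : I → EuclideanSpace ℝ (Fin d)) (α : I → ℝ) (hν : ∀ i, ‖ν i‖ = 1)
    (Z : Set (EuclideanSpace ℝ (Fin d)))
    (hZ : Z = {x | ∀ i, (inner ℝ (ν i) x : ℝ) ≤ α i})
    (hfull : (interior Z).Nonempty)
    (hstd : ∀ i, ∃ x ∈ Z, (inner ℝ (ν i) x : ℝ) = α i ∧
      ∀ j, j ≠ i → (inner ℝ (ν j) x : ℝ) < α j)
    (hobtuse : ∀ i j, i ≠ j → (inner ℝ (ν i) (ν j) : ℝ) ≤ 0)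
    (x y v : EuclideanSpace ℝ (Fin d)) (hx : x ∈ Z) (hy : y ∈ Z) (hv : x + v ∈ Z)
    (q : EuclideanSpace ℝ (Fin d) → EuclideanSpace ℝ (Fin d))
    (hq : IsProjOn (polarCone
      {z | ∀ i, (inner ℝ (ν i) y : ℝ) = α i → (inner ℝ (ν i) z : ℝ) ≤ 0}) q) :
    x + q v ∈ Z := by
  classical
  set K : Set (EuclideanSpace ℝ (Fin d)) :=
    {z | ∀ i, (inner ℝ (ν i) y : ℝ) = α i → (inner ℝ (ν i) z : ℝ) ≤ 0} with hK
  set P : Set (EuclideanSpace ℝ (Fin d)) := polarCone K with hPdef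
  have hPmem : ∀ w, w ∈ P ↔ ∀ z ∈ K, (inner ℝ w z : ℝ) ≤ 0 := fun w => Iff.rfl
  have hP0 : (0 : EuclideanSpace ℝ (Fin d)) ∈ P := by
    intro z hz; simp
  have hPadd : ∀ a b : EuclideanSpace ℝ (Fin d), a ∈ P → b ∈ P → a + b ∈ P := by
    intro a b ha hb z hz
    have := add_nonpos (ha z hz) (hb z hz)
    simpa [inner_add_left] using this
  have hPsmul : ∀ (c : ℝ), 0 ≤ c → ∀ a ∈ P, c • a ∈ P := by
    intro c hc a ha z hz
    have h2 : c * (inner ℝ a z : ℝ) ≤ 0 := mul_nonpos_iff.2 (Or.inl ⟨hc, ha z hz⟩)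
    rw [real_inner_smul_left]
    exact h2
  have hPconv : Convex ℝ P := by
    intro a ha b hb ta tb hta htb htab
    exact hPadd _ _ (hPsmul ta hta a ha) (hPsmul tb htb b hb)
  obtain ⟨hqP, hqmin⟩ := hq v
  -- characterization of the projection
  have hchar : ∀ c ∈ P, (inner ℝ (v - q v) (c - q v) : ℝ) ≤ 0 := by
    haveI : Nonempty P := ⟨⟨q v, hqP⟩⟩
    have hinf : ‖v - q v‖ = ⨅ w : P, ‖v - w‖ := by
      apply le_antisymm
      · exact le_ciInf fun w => by simpa [dist_eq_norm] using hqmin w w.2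
      · exact ciInf_le ⟨0, by rintro t ⟨w, rfl⟩; exact norm_nonneg _⟩ (⟨q v, hqP⟩ : P)
    exact (norm_eq_iInf_iff_real_inner_le_zero hPconv hqP).1 hinf
  have h0 : (inner ℝ (v - q v) (q v) : ℝ) = 0 := by
    have h1 := hchar 0 hP0
    have h2 := hchar ((2:ℝ) • q v) (hPsmul 2 (by norm_num) _ hqP)
    rw [zero_sub, inner_neg_right] at h1
    rw [two_smul, add_sub_cancel_right] at h2
    linarith
  have hle : ∀ c ∈ P, (inner ℝ (v - q v) c : ℝ) ≤ 0 := by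
    intro c hc
    have := hchar (q v + c) (hPadd _ _ hqP hc)
    simpa [add_sub_cancel_left] using this
  -- the finitely generated cone of active normals
  set ν' : I → EuclideanSpace ℝ (Fin d) :=
    fun i => if (inner ℝ (ν i) y : ℝ) = α i then ν i else 0 with hν'def
  have hν'act : ∀ i, (inner ℝ (ν i) y : ℝ) = α i → ν' i = ν i := by
    intro i h; simp only [hν'def]; rw [if_pos h]
  have hν'inact : ∀ i, ¬((inner ℝ (ν i) y : ℝ) = α i) → ν' i = 0 := by
    intro i h; simp only [hν'def]; rw [if_neg h]
  have hν'P : ∀ i, ν' i ∈ P := by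
    intro i z hz
    by_cases h : (inner ℝ (ν i) y : ℝ) = α i
    · rw [hν'act i h]; exact hz i h
    · rw [hν'inact i h]; simp
  set C : Set (EuclideanSpace ℝ (Fin d)) :=
    {w | ∃ l : I → ℝ, (∀ i, 0 ≤ l i) ∧ w = ∑ i, l i • ν' i} with hCdef
  have hν'C : ∀ i, ν' i ∈ C := by
    intro i
    refine ⟨fun k => if k = i then 1 else 0, fun k => by dsimp only; split <;> norm_num, ?_⟩
    simp [ite_smul]
  have hC0 : (0 : EuclideanSpace ℝ (Fin d)) ∈ C := ⟨0, fun i => le_rfl, by simp⟩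
  set Ccone : ConvexCone ℝ (EuclideanSpace ℝ (Fin d)) :=
    { carrier := C
      smul_mem' := by
        rintro c hc w ⟨l, hl, rfl⟩
        exact ⟨fun i => c * l i, fun i => mul_nonneg hc.le (hl i),
          by simp [Finset.smul_sum, smul_smul]⟩
      add_mem' := by
        rintro w ⟨l, hl, rfl⟩ u ⟨m, hm, rfl⟩
        exact ⟨fun i => l i + m i, fun i => add_nonneg (hl i) (hm i),
          by simp [add_smul, Finset.sum_add_distrib]⟩ } with hCcone
  -- q v lies in the closure of C (Farkas / bipolar)
  have hqC : q v ∈ closure C := by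
    by_contra hnot
    obtain ⟨z, hz1, hz2⟩ :=
      ConvexCone.hyperplane_separation_of_nonempty_of_isClosed_of_notMem
        (C := { carrier := closure C
                add_mem' := fun ha hb => Ccone.closure.add_mem' ha hb
                zero_mem' := subset_closure hC0
                smul_mem' := fun c x hx => map_mem_closure (continuous_const_smul c) hx
                  (by
                    rintro w ⟨l, hl, rfl⟩
                    exact ⟨fun i => c * l i, fun i => mul_nonneg c.2 (hl i),
                      by
                        simp only [Finset.smul_sum]
                        exact Finset.sum_congr rfl fun i _ => by rw [← smul_assoc]; rfl⟩)
                isClosed' := isClosed_closure }) (x₀ := q v) hnot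
    have hzK : -z ∈ K := by
      intro i hi
      have h1 : (0:ℝ) ≤ inner ℝ (ν' i) z := hz1 _ (subset_closure (hν'C i))
      rw [hν'act i hi] at h1
      simp only [inner_neg_right]
      linarith
    have h2 := hqP (-z) hzK
    rw [inner_neg_right] at h2
    linarith
  -- conclude
  rw [hZ] at hx hv ⊢
  intro j
  have hxj := hx j
  have hvj := hv j
  rw [inner_add_right] at hvj ⊢
  by_cases hact : (inner ℝ (ν j) y : ℝ) = α j
  · have hνjP : ν j ∈ P := fun z hz => hz j hact
    have hdj : (inner ℝ (v - q v) (ν j) : ℝ) ≤ 0 := hle (ν j) hνjP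
    rcases eq_or_lt_of_le hdj with heq | hlt
    · -- complementary case: ⟪νj, qv⟫ = ⟪νj, v⟫
      have hEq : (inner ℝ (ν j) (q v) : ℝ) = inner ℝ (ν j) v := by
        have h3 : (inner ℝ (v - q v) (ν j) : ℝ) = 0 := heq
        rw [inner_sub_left] at h3
        linarith [real_inner_comm (ν j) (q v), real_inner_comm (ν j) v]
      rw [hEq]; exact hvj
    · -- strict case: show ⟪νj, qv⟫ ≤ 0 using the halfspace trick
      have hqvj : (inner ℝ (ν j) (q v) : ℝ) ≤ 0 := by
        set dj : ℝ := inner ℝ (v - q v) (ν j) with hdjdef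
        have hsub : C ⊆ {u | (0:ℝ) ≤ dj * inner ℝ (ν j) u - inner ℝ (v - q v) u} := by
          rintro w ⟨l, hl, rfl⟩
          have h1 : (inner ℝ (ν j) (∑ i, l i • ν' i) : ℝ) ≤ l j := by
            rw [inner_sum]
            calc (∑ i, (inner ℝ (ν j) (l i • ν' i) : ℝ))
                ≤ ∑ i, (if i = j then l j else 0) := by
                  apply Finset.sum_le_sum
                  intro i _
                  rw [real_inner_smul_right]
                  by_cases hij : i = j
                  · subst hij
                    simp only [if_pos]
                    rw [hν'act i hact, real_inner_self_eq_norm_sq, hν i]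
                    norm_num
                  · simp only [hij, if_neg, if_false]
                    by_cases hiact : (inner ℝ (ν i) y : ℝ) = α i
                    · have hob : (inner ℝ (ν j) (ν i) : ℝ) ≤ 0 :=
                        hobtuse j i (fun h => hij h.symm)
                      rw [hν'act i hiact]
                      exact mul_nonpos_iff.2 (Or.inl ⟨hl i, hob⟩)
                    · rw [hν'inact i hiact]; simp
              _ = l j := by simp
          have h2 : (inner ℝ (v - q v) (∑ i, l i • ν' i) : ℝ) ≤ l j * dj := by
            rw [inner_sum]
            calc (∑ i, (inner ℝ (v - q v) (l i • ν' i) : ℝ))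
                ≤ ∑ i, (if i = j then l j * dj else 0) := by
                  apply Finset.sum_le_sum
                  intro i _
                  rw [real_inner_smul_right]
                  by_cases hij : i = j
                  · subst hij
                    simp only [if_pos]
                    rw [hν'act i hact, hdjdef]
                  · simp only [hij, if_neg, if_false]
                    exact mul_nonpos_iff.2 (Or.inl ⟨hl i, hle _ (hν'P i)⟩)
              _ = l j * dj := by simp
          show (0:ℝ) ≤ dj * inner ℝ (ν j) (∑ i, l i • ν' i) - inner ℝ (v - q v) (∑ i, l i • ν' i)
          nlinarith [mul_nonneg (sub_nonneg.2 h1) (neg_nonneg.2 hlt.le)]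
        have hcl : IsClosed {u : EuclideanSpace ℝ (Fin d) |
            (0:ℝ) ≤ dj * inner ℝ (ν j) u - inner ℝ (v - q v) u} := by
          apply isClosed_le continuous_const
          exact ((continuous_const.mul (continuous_const.inner continuous_id)).sub
            (continuous_const.inner continuous_id))
        have hmem := hcl.closure_subset_iff.2 hsub hqC
        have h4 : (0:ℝ) ≤ dj * inner ℝ (ν j) (q v) := by
          have := hmem
          simp only [Set.mem_setOf_eq, h0, sub_zero] at this
          exact this
        nlinarith [h4, hlt]
      linarith
  · -- inactive constraint: ⟪νj, qv⟫ ≤ 0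
    have hqvj : (inner ℝ (ν j) (q v) : ℝ) ≤ 0 := by
      have hsub : C ⊆ {u | (inner ℝ (ν j) u : ℝ) ≤ 0} := by
        rintro w ⟨l, hl, rfl⟩
        show (inner ℝ (ν j) (∑ i, l i • ν' i) : ℝ) ≤ 0
        rw [inner_sum]
        apply Finset.sum_nonpos
        intro i _
        rw [real_inner_smul_right]
        by_cases hiact : (inner ℝ (ν i) y : ℝ) = α i
        · have hij : i ≠ j := fun h => hact (h ▸ hiact)
          have hob : (inner ℝ (ν j) (ν i) : ℝ) ≤ 0 := hobtuse j i (fun h => hij h.symm)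
          rw [hν'act i hiact]
          exact mul_nonpos_iff.2 (Or.inl ⟨hl i, hob⟩)
        · rw [hν'inact i hiact]; simp
      have hcl : IsClosed {u : EuclideanSpace ℝ (Fin d) | (inner ℝ (ν j) u : ℝ) ≤ 0} :=
        isClosed_le (continuous_const.inner continuous_id) continuous_const
      exact hcl.closure_subset_iff.2 hsub hqC
    linarith
end
end

section
/- Let Z ⊂ ℝ^d be a full-dimensional non-obtuse convex polyhedron with standard description {(ν_i, α_i)}_{i∈I}. If x ∈ ℝ^d satisfies ⟨ν_j, x⟩ = α_j for some j ∈ I, then the projection onto Z satisfies ⟨ν_j, π_Z(x)⟩ = α_j; i.e., projecting a point lying on the hyperplane of a facet keeps it on that hyperplane. -/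
open Metric Set

noncomputable section

/-- For a full-dimensional non-obtuse convex polyhedron with standard description:
projecting a point lying on the hyperplane of a facet keeps it on that hyperplane. -/
theorem stmt11 {d : ℕ} {I : Type*} [Fintype I]
    (ν : I → EuclideanSpace ℝ (Fin d)) (α : I → ℝ) (hν : ∀ i, ‖ν i‖ = 1)
    (Z : Set (EuclideanSpace ℝ (Fin d)))
    (hZ : Z = {x | ∀ i, (inner ℝ (ν i) x : ℝ) ≤ α i})
    (hfull : (interior Z).Nonempty)
    (hstd : ∀ i, ∃ x ∈ Z, (inner ℝ (ν i) x : ℝ) = α i ∧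
      ∀ j, j ≠ i → (inner ℝ (ν j) x : ℝ) < α j)
    (hobtuse : ∀ i j, i ≠ j → (inner ℝ (ν i) (ν j) : ℝ) ≤ 0)
    (p : EuclideanSpace ℝ (Fin d) → EuclideanSpace ℝ (Fin d)) (hp : IsProjOn Z p)
    (x : EuclideanSpace ℝ (Fin d)) (j : I) (hxj : (inner ℝ (ν j) x : ℝ) = α j) :
    (inner ℝ (ν j) (p x) : ℝ) = α j := by
  obtain ⟨hyZ, hmin⟩ := hp x
  set y := p x with hy
  rw [hZ] at hyZ
  have hyle : (inner ℝ (ν j) y : ℝ) ≤ α j := hyZ j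
  by_contra hne
  have ht : 0 < α j - inner ℝ (ν j) y := by
    rcases lt_or_eq_of_le hyle with h | h
    · linarith
    · exact absurd h hne
  set t : ℝ := α j - inner ℝ (ν j) y with htdef
  set y' := y + t • ν j with hy'
  have hνj1 : (inner ℝ (ν j) (ν j) : ℝ) = 1 := by
    rw [real_inner_self_eq_norm_sq, hν j]; norm_num
  have hy'Z : y' ∈ Z := by
    rw [hZ]
    intro i
    have hsplit : (inner ℝ (ν i) y' : ℝ) = inner ℝ (ν i) y + t * inner ℝ (ν i) (ν j) := by
      rw [hy', inner_add_right, real_inner_smul_right]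
    show (inner ℝ (ν i) y' : ℝ) ≤ α i
    rw [hsplit]
    by_cases hij : i = j
    · subst hij; rw [hνj1]; linarith
    · have h1 : (inner ℝ (ν i) (ν j) : ℝ) ≤ 0 := hobtuse i j hij
      have h2 : (inner ℝ (ν i) y : ℝ) ≤ α i := hyZ i
      nlinarith
  have hd := hmin y' hy'Z
  rw [dist_eq_norm, dist_eq_norm] at hd
  have hinner : (inner ℝ (ν j) (x - y) : ℝ) = t := by
    rw [inner_sub_right, hxj]
  have hdiff : x - y' = (x - y) - t • ν j := by
    rw [hy']; abel
  have hsq : ‖x - y'‖ ^ 2 = ‖x - y‖ ^ 2 - t ^ 2 := by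
    rw [hdiff, norm_sub_sq_real, real_inner_smul_right, real_inner_comm, hinner,
      norm_smul, Real.norm_eq_abs, hν j]
    rw [mul_pow, sq_abs]
    ring
  nlinarith [norm_nonneg (x - y'), norm_nonneg (x - y), hd, hsq, ht]
end
end

section
/- Let Z ⊂ ℝ^d be a full-dimensional non-obtuse convex polyhedral cone with standard description {(ν_i, 0)}_{i∈I}. Then for all x, y ∈ Z, the projection π_{y+Z°}(x) belongs to Z and x − π_{y+Z°}(x) = π_Z(x − y) ∈ Z. -/
open Metric Set

noncomputable section

section Aux

open Finset
open scoped RealInnerProductSpace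

variable {E : Type*} [NormedAddCommGroup E] [InnerProductSpace ℝ E]


theorem carath {I : Type*} [Fintype I] (ν : I → E) (n : ℕ) :
    ∀ lam : I → ℝ, (∀ i, 0 ≤ lam i) →
      (Finset.univ.filter fun i => lam i ≠ 0).card ≤ n →
      ∃ μ : I → ℝ, (∀ i, 0 ≤ μ i) ∧ (∑ i, μ i • ν i) = (∑ i, lam i • ν i) ∧
        LinearIndependent ℝ (fun i : {i // μ i ≠ 0} => ν i) := by
  classical
  induction n with
  | zero =>
    intro lam hlam hcard
    refine ⟨lam, hlam, rfl, ?_⟩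
    have hz : ∀ i, lam i = 0 := by
      intro i
      by_contra h
      have : (Finset.univ.filter fun i => lam i ≠ 0).Nonempty := ⟨i, by simp [h]⟩
      have := Finset.card_pos.2 this
      omega
    have : IsEmpty {i // lam i ≠ 0} := ⟨fun ⟨i, hi⟩ => hi (hz i)⟩
    exact linearIndependent_empty_type
  | succ n ih =>
    intro lam hlam hcard
    by_cases hind : LinearIndependent ℝ (fun i : {i // lam i ≠ 0} => ν i)
    · exact ⟨lam, hlam, rfl, hind⟩
    · obtain ⟨g, hg0, ⟨i₀, hi₀⟩⟩ := Fintype.not_linearIndependent_iff.1 hind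
      -- wlog some coordinate of g is positive
      have key : ∀ g : {i // lam i ≠ 0} → ℝ, (∑ i, g i • ν i = 0) →
          (∃ i, 0 < g i) →
          ∃ μ : I → ℝ, (∀ i, 0 ≤ μ i) ∧ (∑ i, μ i • ν i) = (∑ i, lam i • ν i) ∧
            LinearIndependent ℝ (fun i : {i // μ i ≠ 0} => ν i) := by
        intro g hg0 ⟨ip, hip⟩
        set c : I → ℝ := fun i => if h : lam i ≠ 0 then g ⟨i, h⟩ else 0 with hc
        have hcsum : ∑ i, c i • ν i = 0 := by
          have h1 : ∑ i ∈ Finset.univ.filter (fun i => lam i ≠ 0), c i • ν i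
              = ∑ i, c i • ν i := by
            apply Finset.sum_filter_of_ne
            intro i _ hne hlami
            apply hne
            simp [hc, hlami]
          have h2 : ∑ i ∈ Finset.univ.filter (fun i => lam i ≠ 0), c i • ν i
              = ∑ i : {i // lam i ≠ 0}, c i.1 • ν i.1 :=
            Finset.sum_subtype _ (by simp) _
          have h3 : ∑ i : {i // lam i ≠ 0}, c i.1 • ν i.1
              = ∑ i : {i // lam i ≠ 0}, g i • ν i.1 := by
            apply Finset.sum_congr rfl
            intro i _
            have : c i.1 = g i := by
              show (if h : lam i.1 ≠ 0 then g ⟨i.1, h⟩ else 0) = g i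
              rw [dif_pos i.2]
            rw [this]
          rw [← h1, h2, h3, hg0]
        -- the set of indices with positive c
        have hsne : (Finset.univ.filter fun i => 0 < c i).Nonempty := by
          refine ⟨ip.1, ?_⟩
          simp only [Finset.mem_filter, Finset.mem_univ, true_and, hc]
          rw [dif_pos ip.2]
          exact hip
        set t : ℝ := (Finset.univ.filter fun i => 0 < c i).inf' hsne
          (fun i => lam i / c i) with ht
        obtain ⟨im, him, htim⟩ := (Finset.univ.filter fun i => 0 < c i).exists_mem_eq_inf'
          hsne (fun i => lam i / c i)
        have hcim : 0 < c im := (Finset.mem_filter.1 him).2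
        have ht0 : 0 ≤ t := by
          rw [ht, Finset.le_inf'_iff]
          intro i hi
          exact div_nonneg (hlam i) (le_of_lt (Finset.mem_filter.1 hi).2)
        set μ : I → ℝ := fun i => lam i - t * c i with hμ
        have hμ0 : ∀ i, 0 ≤ μ i := by
          intro i
          by_cases hci : 0 < c i
          · have : t ≤ lam i / c i := by
              rw [ht]
              exact Finset.inf'_le _ (by simp [hci])
            have h4 := mul_le_mul_of_nonneg_right this (le_of_lt hci)
            rw [div_mul_cancel₀ _ (ne_of_gt hci)] at h4
            simp only [hμ]
            linarith
          · rw [not_lt] at hci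
            have : t * c i ≤ 0 := mul_nonpos_of_nonneg_of_nonpos ht0 hci
            simp only [hμ]
            linarith [hlam i]
        have hμsum : (∑ i, μ i • ν i) = (∑ i, lam i • ν i) := by
          simp only [hμ, sub_smul, Finset.sum_sub_distrib, mul_smul]
          rw [← Finset.smul_sum, hcsum, smul_zero, sub_zero]
        have hsupp : ∀ i, μ i ≠ 0 → lam i ≠ 0 := by
          intro i hi
          intro h
          apply hi
          have : c i = 0 := by simp [hc, h]
          simp [hμ, h, this]
        have hμim : μ im = 0 := by
          have heq : t = lam im / c im := htim
          simp only [hμ]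
          rw [heq, div_mul_cancel₀ _ (ne_of_gt hcim)]
          ring
        have hlamim : lam im ≠ 0 := by
          intro h
          have : c im = 0 := by simp [hc, h]
          rw [this] at hcim
          exact lt_irrefl 0 hcim
        have hcardμ : (Finset.univ.filter fun i => μ i ≠ 0).card ≤ n := by
          have hss : (Finset.univ.filter fun i => μ i ≠ 0) ⊆
              (Finset.univ.filter fun i => lam i ≠ 0).erase im := by
            intro i hi
            simp only [Finset.mem_filter, Finset.mem_univ, true_and] at hi
            refine Finset.mem_erase.2 ⟨?_, by simp [hsupp i hi]⟩
            intro h; exact hi (h ▸ hμim)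
          have := Finset.card_le_card hss
          have h2 := Finset.card_erase_of_mem (a := im)
            (s := Finset.univ.filter fun i => lam i ≠ 0) (by simp [hlamim])
          omega
        obtain ⟨μ', h1, h2, h3⟩ := ih μ hμ0 hcardμ
        exact ⟨μ', h1, h2.trans hμsum, h3⟩
      rcases lt_trichotomy (g i₀) 0 with h | h | h
      · refine key (fun i => -g i) ?_ ⟨i₀, by show 0 < -g i₀; linarith⟩
        simp only [neg_smul, Finset.sum_neg_distrib, hg0, neg_zero]
      · exact absurd h hi₀
      · exact key g hg0 ⟨i₀, h⟩
theorem isClosed_posSpan {I : Type*} [Fintype I] [FiniteDimensional ℝ E] (ν : I → E) :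
    IsClosed {w : E | ∃ lam : I → ℝ, (∀ i, 0 ≤ lam i) ∧ w = ∑ i, lam i • ν i} := by
  classical
  have hunion : {w : E | ∃ lam : I → ℝ, (∀ i, 0 ≤ lam i) ∧ w = ∑ i, lam i • ν i}
      = ⋃ s ∈ {s : Finset I | LinearIndependent ℝ (fun i : {i // i ∈ s} => ν i.1)},
      ((Fintype.linearCombination ℝ (fun i : {i // i ∈ s} => ν i.1)) ''
        {lam | ∀ i, 0 ≤ lam i}) := by
    ext w
    simp only [mem_iUnion, Set.mem_setOf_eq, Set.mem_image, exists_prop]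
    constructor
    · rintro ⟨lam, hlam, rfl⟩
      obtain ⟨μ, hμ0, hμsum, hμind⟩ :=
        carath ν (Finset.univ.filter fun i => lam i ≠ 0).card lam hlam le_rfl
      set s : Finset I := Finset.univ.filter fun i => μ i ≠ 0 with hs
      have hmem : ∀ i, i ∈ s ↔ μ i ≠ 0 := fun i => by simp [hs]
      refine ⟨s, ?_, fun i => μ i.1, fun i => hμ0 i.1, ?_⟩
      · rw [show (fun i : {i // i ∈ s} => ν i.1)
            = (fun i : {i // μ i ≠ 0} => ν i.1) ∘ (Equiv.subtypeEquivRight hmem) from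
            funext fun i => by simp [Equiv.subtypeEquivRight]; rfl]
        exact hμind.comp _ (Equiv.subtypeEquivRight hmem).injective
      · rw [Fintype.linearCombination_apply]
        calc ∑ i : {i // i ∈ s}, μ i.1 • ν i.1
            = ∑ i ∈ s, μ i • ν i := (Finset.sum_subtype (p := fun i => i ∈ s) s (fun _ => Iff.rfl) (fun i => μ i • ν i)).symm
          _ = ∑ i, μ i • ν i := by
              apply Finset.sum_subset (Finset.subset_univ s)
              intro i _ hi
              rw [hmem] at hi
              push_neg at hi
              simp [hi]
          _ = ∑ i, lam i • ν i := hμsum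
    · rintro ⟨s, _, lam, hlam, rfl⟩
      set lam' : I → ℝ := fun i => if h : i ∈ s then lam ⟨i, h⟩ else 0 with hlam'
      refine ⟨lam', ?_, ?_⟩
      · intro i
        by_cases h : i ∈ s
        · simpa [hlam', h] using hlam ⟨i, h⟩
        · simp [hlam', h]
      · rw [Fintype.linearCombination_apply]
        symm
        calc (∑ i, lam' i • ν i)
            = ∑ i ∈ s, lam' i • ν i := by
              refine (Finset.sum_subset (Finset.subset_univ s) ?_).symm
              intro i _ hi
              simp [hlam', hi]
          _ = ∑ i : {i // i ∈ s}, lam' i.1 • ν i.1 :=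
              Finset.sum_subtype (p := fun i => i ∈ s) s (fun _ => Iff.rfl) (fun i => lam' i • ν i)
          _ = ∑ i : {i // i ∈ s}, lam i • ν i.1 := by
              apply Finset.sum_congr rfl
              intro i _
              have : lam' i.1 = lam i := by
                show (if h : i.1 ∈ s then lam ⟨i.1, h⟩ else 0) = lam i
                rw [dif_pos i.2]
              rw [this]
  rw [hunion]
  apply Set.Finite.isClosed_biUnion (Set.toFinite _)
  intro s hs
  have hinj : Function.Injective
      (Fintype.linearCombination ℝ (fun i : {i // i ∈ s} => ν i.1)) := by
    intro a b hab
    have hz : ∀ i, (a - b) i = 0 := by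
      apply Fintype.linearIndependent_iff.1 hs
      simp only [Pi.sub_apply, sub_smul, Finset.sum_sub_distrib]
      rw [show (∑ i : {i // i ∈ s}, a i • ν i.1) = Fintype.linearCombination ℝ
        (fun i : {i // i ∈ s} => ν i.1) a from rfl, hab]
      simp [Fintype.linearCombination_apply]
    funext i
    have := hz i
    simp only [Pi.sub_apply, sub_eq_zero] at this
    exact this
  have hce := LinearMap.isClosedEmbedding_of_injective (LinearMap.ker_eq_bot.2 hinj)
  have hclosed : IsClosed {lam : {i // i ∈ s} → ℝ | ∀ i, 0 ≤ lam i} := by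
    have : {lam : {i // i ∈ s} → ℝ | ∀ i, 0 ≤ lam i}
        = ⋂ i, {lam : {i // i ∈ s} → ℝ | 0 ≤ lam i} := by ext; simp [Set.mem_iInter]
    rw [this]
    exact isClosed_iInter fun i => isClosed_le continuous_const (continuous_apply i)
  exact hce.isClosedMap _ hclosed

/-- The cone of nonnegative combinations of the `ν i`, as a `ConvexCone`. -/
def posSpanCone {I : Type*} [Fintype I] (ν : I → E) : ConvexCone ℝ E where
  carrier := {w : E | ∃ lam : I → ℝ, (∀ i, 0 ≤ lam i) ∧ w = ∑ i, lam i • ν i}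
  smul_mem' := by
    rintro c hc w ⟨lam, h0, rfl⟩
    exact ⟨fun i => c * lam i, fun i => mul_nonneg hc.le (h0 i),
      by simp [Finset.smul_sum, mul_smul]⟩
  add_mem' := by
    rintro w ⟨lam, h0, rfl⟩ w' ⟨lam', h0', rfl⟩
    exact ⟨lam + lam', fun i => add_nonneg (h0 i) (h0' i),
      by simp [add_smul, Finset.sum_add_distrib]⟩

theorem farkas {I : Type*} [Fintype I] [FiniteDimensional ℝ E] (ν : I → E) (n : E)
    (h : ∀ z : E, (∀ i, ⟪ν i, z⟫ ≤ 0) → ⟪n, z⟫ ≤ 0) :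
    ∃ lam : I → ℝ, (∀ i, 0 ≤ lam i) ∧ n = ∑ i, lam i • ν i := by
  classical
  by_contra hcon
  have hnmem : n ∉ posSpanCone ν := by
    intro ⟨lam, h0, heq⟩
    exact hcon ⟨lam, h0, heq⟩
  let C : ProperCone ℝ E :=
    { carrier := {w : E | ∃ lam : I → ℝ, (∀ i, 0 ≤ lam i) ∧ w = ∑ i, lam i • ν i}
      add_mem' := @fun a b ha hb => (posSpanCone ν).add_mem' ha hb
      zero_mem' := ⟨fun _ => 0, fun i => le_rfl, by simp⟩
      smul_mem' := by
        rintro ⟨c, hc⟩ w ⟨lam, h0, rfl⟩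
        exact ⟨fun i => c * lam i, fun i => mul_nonneg hc (h0 i),
          by simp [Finset.smul_sum, mul_smul]⟩
      isClosed' := isClosed_posSpan ν }
  obtain ⟨z, hz1, hz2⟩ := C.hyperplane_separation' (x₀ := n) hnmem
  have hν : ∀ i, 0 ≤ ⟪ν i, z⟫ := by
    intro i
    apply hz1
    show ∃ lam : I → ℝ, (∀ j, 0 ≤ lam j) ∧ ν i = ∑ j, lam j • ν j
    refine ⟨fun j => if j = i then 1 else 0, fun j => by positivity, ?_⟩
    simp [ite_smul]
  have := h (-z) (fun i => by rw [inner_neg_right]; linarith [hν i])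
  rw [inner_neg_right] at this
  linarith

theorem proj_var {s : Set E} (hconv : Convex ℝ s) {u p : E} (hp : p ∈ s)
    (hmin : ∀ v ∈ s, dist u p ≤ dist u v) : ∀ w ∈ s, ⟪u - p, w - p⟫ ≤ 0 := by
  haveI : Nonempty s := ⟨⟨p, hp⟩⟩
  have hinf : ‖u - p‖ = ⨅ w : s, ‖u - w‖ := by
    apply le_antisymm
    · apply le_ciInf
      intro w
      have := hmin w.1 w.2
      rwa [dist_eq_norm, dist_eq_norm] at this
    · exact ciInf_le ⟨0, fun x ⟨w, hw⟩ => hw ▸ norm_nonneg _⟩ (⟨p, hp⟩ : s)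
  exact (norm_eq_iInf_iff_real_inner_le_zero hconv hp).1 hinf

theorem proj_uniq {s : Set E} {u p q : E} (hp : p ∈ s) (hq : q ∈ s)
    (h1 : ∀ w ∈ s, ⟪u - p, w - p⟫ ≤ 0) (h2 : ∀ w ∈ s, ⟪u - q, w - q⟫ ≤ 0) : p = q := by
  have a := h1 q hq
  have b := h2 p hp
  have key : ⟪u - p, q - p⟫ + ⟪u - q, p - q⟫ = ‖q - p‖ ^ 2 := by
    calc ⟪u - p, q - p⟫ + ⟪u - q, p - q⟫
        = ⟪u - p, q - p⟫ - ⟪u - q, q - p⟫ := by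
          rw [show p - q = -(q - p) by abel, inner_neg_right]; ring
      _ = ⟪(u - p) - (u - q), q - p⟫ := (inner_sub_left _ _ _).symm
      _ = ⟪q - p, q - p⟫ := by rw [show (u - p) - (u - q) = q - p by abel]
      _ = ‖q - p‖ ^ 2 := real_inner_self_eq_norm_sq _
  have hn : ‖q - p‖ = 0 := by nlinarith [norm_nonneg (q - p)]
  have := norm_eq_zero.1 hn
  rw [sub_eq_zero] at this
  exact this.symm

end Aux

open scoped RealInnerProductSpace in
/-- For a full-dimensional non-obtuse convex polyhedral cone `Z` and `x, y ∈ Z`: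
`π_{y+Z°}(x) ∈ Z` and `x − π_{y+Z°}(x) = π_Z(x − y) ∈ Z`. -/
theorem stmt12 {d : ℕ} {I : Type*} [Fintype I]
    (ν : I → EuclideanSpace ℝ (Fin d)) (hν : ∀ i, ‖ν i‖ = 1)
    (Z : Set (EuclideanSpace ℝ (Fin d)))
    (hZ : Z = {x | ∀ i, (inner ℝ (ν i) x : ℝ) ≤ 0})
    (hfull : (interior Z).Nonempty)
    (hstd : ∀ i, ∃ x ∈ Z, (inner ℝ (ν i) x : ℝ) = 0 ∧
      ∀ j, j ≠ i → (inner ℝ (ν j) x : ℝ) < 0)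
    (hobtuse : ∀ i j, i ≠ j → (inner ℝ (ν i) (ν j) : ℝ) ≤ 0)
    (x y : EuclideanSpace ℝ (Fin d)) (hx : x ∈ Z) (hy : y ∈ Z)
    (pZ pT : EuclideanSpace ℝ (Fin d) → EuclideanSpace ℝ (Fin d))
    (hpZ : IsProjOn Z pZ)
    (hpT : IsProjOn {v | ∃ w ∈ polarCone Z, v = y + w} pT) :
    pT x ∈ Z ∧ x - pT x = pZ (x - y) ∧ pZ (x - y) ∈ Z := by
  classical
  subst hZ
  set Z : Set (EuclideanSpace ℝ (Fin d)) := {x | ∀ i, ⟪ν i, x⟫ ≤ 0} with hZdef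
  -- basic properties of Z
  have hZconv : Convex ℝ Z := by
    intro u hu v hv a b ha hb hab
    intro i
    show ⟪ν i, a • u + b • v⟫ ≤ 0
    rw [inner_add_right, real_inner_smul_right, real_inner_smul_right]
    nlinarith [hu i, hv i]
  have hzero : (0 : EuclideanSpace ℝ (Fin d)) ∈ Z := fun i => by
    rw [inner_zero_right]
  have h2p : ∀ z ∈ Z, (2 : ℝ) • z ∈ Z := by
    intro z hz i
    show ⟪ν i, (2:ℝ) • z⟫ ≤ 0
    rw [real_inner_smul_right]
    linarith [hz i]
  obtain ⟨hpmem, hpmin⟩ := hpZ (x - y)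
  set p : EuclideanSpace ℝ (Fin d) := pZ (x - y) with hp
  have hvar := proj_var hZconv hpmem hpmin
  set n : EuclideanSpace ℝ (Fin d) := (x - y) - p with hn
  -- ⟪n, p⟫ = 0
  have hnp : ⟪n, p⟫ = 0 := by
    have h0 := hvar 0 hzero
    have h2 := hvar ((2:ℝ) • p) (h2p p hpmem)
    rw [zero_sub, inner_neg_right] at h0
    rw [show (2:ℝ) • p - p = p by module] at h2
    linarith
  -- n is in the polar cone of Z
  have hnpolar : ∀ z ∈ Z, ⟪n, z⟫ ≤ 0 := by
    intro z hz
    have := hvar z hz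
    rw [inner_sub_right] at this
    linarith [hnp]
  -- Farkas decomposition of n
  obtain ⟨lam, hlam0, hlameq⟩ := farkas ν n (fun z hz => hnpolar z hz)
  -- complementary slackness
  have hterm : ∀ i, lam i * ⟪ν i, p⟫ = 0 := by
    have hsum : ∑ i, -(lam i * ⟪ν i, p⟫) = 0 := by
      have h : ⟪n, p⟫ = ∑ i, lam i * ⟪ν i, p⟫ := by
        rw [hlameq, sum_inner]
        exact Finset.sum_congr rfl fun i _ => real_inner_smul_left _ _ _
      rw [Finset.sum_neg_distrib, ← h, hnp, neg_zero]
    have hnonneg : ∀ i ∈ Finset.univ, 0 ≤ -(lam i * ⟪ν i, p⟫) := fun i _ =>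
      neg_nonneg.2 (mul_nonpos_of_nonneg_of_nonpos (hlam0 i) (hpmem i))
    intro i
    have := (Finset.sum_eq_zero_iff_of_nonneg hnonneg).1 hsum i (Finset.mem_univ i)
    linarith
  set q : EuclideanSpace ℝ (Fin d) := x - p with hq
  have hqyn : q = y + n := by rw [hq, hn]; abel
  -- q ∈ Z
  have hqZ : q ∈ Z := by
    intro j
    by_cases hj : lam j = 0
    · show ⟪ν j, q⟫ ≤ 0
      rw [hqyn, inner_add_right]
      have hnle : ⟪ν j, n⟫ ≤ 0 := by
        have : ⟪ν j, n⟫ = ∑ i, lam i * ⟪ν j, ν i⟫ := by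
          rw [hlameq, inner_sum]
          exact Finset.sum_congr rfl fun i _ => real_inner_smul_right _ _ _
        rw [this]
        apply Finset.sum_nonpos
        intro i _
        by_cases hij : i = j
        · subst hij; rw [hj]; simp
        · exact mul_nonpos_of_nonneg_of_nonpos (hlam0 i)
            (hobtuse j i fun h => hij h.symm)
      linarith [hy j]
    · have hpj : ⟪ν j, p⟫ = 0 := by
        rcases mul_eq_zero.1 (hterm j) with h | h
        · exact absurd h hj
        · exact h
      show ⟪ν j, q⟫ ≤ 0
      rw [hq, inner_sub_right, hpj]
      linarith [hx j]
  -- the translated polar cone T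
  set T : Set (EuclideanSpace ℝ (Fin d)) := {v | ∃ w ∈ polarCone Z, v = y + w} with hT
  have hTconv : Convex ℝ T := by
    rintro v1 ⟨w1, hw1, rfl⟩ v2 ⟨w2, hw2, rfl⟩ a b ha hb hab
    refine ⟨a • w1 + b • w2, ?_, ?_⟩
    · intro z hz
      have h1 := hw1 z hz
      have h2 := hw2 z hz
      show ⟪a • w1 + b • w2, z⟫ ≤ 0
      rw [inner_add_left, real_inner_smul_left, real_inner_smul_left]
      nlinarith
    · have : a • (y + w1) + b • (y + w2) = (a + b) • y + (a • w1 + b • w2) := by module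
      rw [this, hab, one_smul]
  have hqT : q ∈ T := ⟨n, hnpolar, hqyn⟩
  -- q satisfies the variational inequality for projecting x onto T
  have hqvar : ∀ v ∈ T, ⟪x - q, v - q⟫ ≤ 0 := by
    rintro v ⟨w, hw, rfl⟩
    have hxq : x - q = p := by rw [hq]; abel
    have hvq : y + w - q = w - n := by rw [hqyn]; abel
    rw [hxq, hvq, inner_sub_right]
    have h1 : ⟪p, w⟫ ≤ 0 := by rw [real_inner_comm]; exact hw p hpmem
    have h2 : ⟪p, n⟫ = 0 := by rw [real_inner_comm]; exact hnp
    linarith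
  obtain ⟨hTmem, hTmin⟩ := hpT x
  have hTvar := proj_var hTconv hTmem hTmin
  have huniq : pT x = q := proj_uniq hTmem hqT hTvar hqvar
  refine ⟨?_, ?_, hpmem⟩
  · rw [huniq]; exact hqZ
  · rw [huniq, hq]; abel
end
end

section
/- Let Z ⊂ ℝ^d be a full-dimensional non-obtuse convex polyhedral cone with standard description {(ν_i, 0)}_{i∈I}, let J ⊂ I, and let V = span{ν_i : i ∈ J}^⊥. Then the orthogonal projection onto the subspace V maps Z into itself: x ∈ Z implies π_V(x) ∈ Z. -/
open Metric Set

noncomputable section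

open Finset in

lemma key13 {d : ℕ} {I : Type*} [Fintype I] (ν : I → EuclideanSpace ℝ (Fin d))
    (J : Set I) (hobt : ∀ i j, i ≠ j → (inner ℝ (ν i) (ν j) : ℝ) ≤ 0)
    (u : EuclideanSpace ℝ (Fin d)) (hu : u ∈ Submodule.span ℝ (ν '' J))
    (hpos : ∀ j ∈ J, 0 ≤ (inner ℝ (ν j) u : ℝ)) :
    ∃ c : I → ℝ, (∀ j, 0 ≤ c j) ∧ (∀ j, j ∉ J → c j = 0) ∧ u = ∑ j, c j • ν j := by
  rw [Finsupp.mem_span_image_iff_linearCombination] at hu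
  obtain ⟨l, hl, hlu⟩ := hu
  rw [Finsupp.linearCombination_apply, Finsupp.sum_fintype] at hlu
  swap
  · intro i; simp
  have hsupp : ∀ j, j ∉ J → l j = 0 := by
    intro j hj
    by_contra h
    exact hj (hl (Finsupp.mem_support_iff.mpr h))
  set c : I → ℝ := fun j => max (l j) 0 with hc
  set m : I → ℝ := fun j => min (l j) 0 with hm
  have hlcm : ∀ j, (l j : ℝ) = c j + m j := by
    intro j; simp [hc, hm, max_add_min]
  refine ⟨c, fun j => le_max_right _ _, fun j hj => by simp [hc, hsupp j hj], ?_⟩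
  set uneg : EuclideanSpace ℝ (Fin d) := ∑ j, m j • ν j with huneg
  have hsplit : u = (∑ j, c j • ν j) + uneg := by
    rw [← hlu, ← Finset.sum_add_distrib]
    congr 1; ext j
    rw [hlcm j, add_smul]
  -- ⟨u, uneg⟩ ≤ 0
  have h1 : (inner ℝ u uneg : ℝ) ≤ 0 := by
    rw [huneg, inner_sum]
    apply Finset.sum_nonpos
    intro j _
    rw [real_inner_smul_right]
    by_cases hj : j ∈ J
    · have : m j ≤ 0 := min_le_right _ _
      have := hpos j hj
      rw [real_inner_comm] at this
      exact mul_nonpos_iff.mpr (Or.inr ⟨min_le_right _ _, this⟩)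
    · simp [hm, hsupp j hj]
  -- ⟨upos, uneg⟩ ≥ 0
  have h2 : 0 ≤ (inner ℝ (∑ j, c j • ν j) uneg : ℝ) := by
    rw [huneg, sum_inner]
    apply Finset.sum_nonneg
    intro j _
    rw [inner_sum]
    apply Finset.sum_nonneg
    intro k _
    rw [real_inner_smul_left, real_inner_smul_right]
    by_cases hjk : j = k
    · subst hjk
      rcases le_or_gt (l j) 0 with h | h
      · have : c j = 0 := by simp [hc, h]
        simp [this]
      · have : m j = 0 := by simp [hm, h.le]
        simp [this]
    · have := hobt j k hjk
      have hcj : 0 ≤ c j := le_max_right _ _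
      have hmk : m k ≤ 0 := min_le_right _ _
      have : 0 ≤ m k * (inner ℝ (ν j) (ν k) : ℝ) := by nlinarith
      positivity
  have h3 : (inner ℝ uneg uneg : ℝ) ≤ 0 := by
    have : (inner ℝ u uneg : ℝ) = inner ℝ (∑ j, c j • ν j) uneg + inner ℝ uneg uneg := by
      rw [hsplit, inner_add_left]
    linarith
  have h4 : uneg = 0 := by
    have := real_inner_self_nonneg (x := uneg)
    have : (inner ℝ uneg uneg : ℝ) = 0 := le_antisymm h3 this
    exact inner_self_eq_zero.mp this
  rw [hsplit, h4, add_zero]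



/-- For a full-dimensional non-obtuse convex polyhedral cone `Z` with standard
description and any subset `J` of the indices, the orthogonal projection onto
`V = span{νᵢ : i ∈ J}ᗮ` maps `Z` into itself. -/
theorem stmt13 {d : ℕ} {I : Type*} [Fintype I]
    (ν : I → EuclideanSpace ℝ (Fin d)) (hν : ∀ i, ‖ν i‖ = 1)
    (Z : Set (EuclideanSpace ℝ (Fin d)))
    (hZ : Z = {x | ∀ i, (inner ℝ (ν i) x : ℝ) ≤ 0})
    (hfull : (interior Z).Nonempty)
    (hstd : ∀ i, ∃ x ∈ Z, (inner ℝ (ν i) x : ℝ) = 0 ∧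
      ∀ j, j ≠ i → (inner ℝ (ν j) x : ℝ) < 0)
    (hobtuse : ∀ i j, i ≠ j → (inner ℝ (ν i) (ν j) : ℝ) ≤ 0)
    (J : Set I) :
    ∀ x ∈ Z,
      ((Submodule.orthogonalProjection ((Submodule.span ℝ (ν '' J))ᗮ) x :
        EuclideanSpace ℝ (Fin d)) ∈ Z) := by
  intro x hx
  subst hZ
  set W : Submodule ℝ (EuclideanSpace ℝ (Fin d)) := Submodule.span ℝ (ν '' J) with hW
  set y : EuclideanSpace ℝ (Fin d) := (Submodule.orthogonalProjection Wᗮ x : EuclideanSpace ℝ (Fin d)) with hy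
  have hyV : y ∈ Wᗮ := (Submodule.orthogonalProjection Wᗮ x).2
  have hxy : x - y ∈ W := by
    have := Submodule.sub_starProjection_mem_orthogonal (K := Wᗮ) x
    rwa [Submodule.orthogonal_orthogonal] at this
  set u : EuclideanSpace ℝ (Fin d) := -(x - y) with hu
  have huW : u ∈ W := neg_mem hxy
  have hνJ : ∀ j ∈ J, ν j ∈ W := fun j hj => Submodule.subset_span ⟨j, hj, rfl⟩
  have hyj : ∀ j ∈ J, (inner ℝ (ν j) y : ℝ) = 0 := fun j hj => hyV (ν j) (hνJ j hj)
  have hpos : ∀ j ∈ J, 0 ≤ (inner ℝ (ν j) u : ℝ) := by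
    intro j hj
    rw [hu, inner_neg_right, inner_sub_right, hyj j hj]
    have := hx j
    linarith
  obtain ⟨c, hc0, hcJ, hcu⟩ := key13 ν J hobtuse u huW hpos
  intro i
  have hyx : y = x + u := by rw [hu]; abel
  by_cases hi : i ∈ J
  · rw [hyj i hi]
  · have hiu : (inner ℝ (ν i) u : ℝ) ≤ 0 := by
      rw [hcu, inner_sum]
      apply Finset.sum_nonpos
      intro j _
      rw [real_inner_smul_right]
      by_cases hj : j ∈ J
      · have hij : i ≠ j := fun h => hi (h ▸ hj)
        exact mul_nonpos_iff.mpr (Or.inl ⟨hc0 j, hobtuse i j hij⟩)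
      · simp [hcJ j hj]
    rw [hyx, inner_add_right]
    have := hx i
    linarith
end
end

section
/- Let Z ⊂ ℝ^d be a full-dimensional convex polyhedral cone with standard description {(ν_i, 0)}_{i∈I} that is NOT non-obtuse, i.e., there exist i ≠ j with ⟨ν_i, ν_j⟩ > 0. Then Z has an obtuse ridge: there exists w ∈ Z whose active set is exactly {i₁, i₂} for some indices i₁, i₂ with ⟨ν_{i₁}, ν_{i₂}⟩ > 0. -/
open Metric Set Filter Topology

open scoped RealInnerProductSpace

noncomputable section

private lemma aux_dir {E : Type*} [NormedAddCommGroup E] [InnerProductSpace ℝ E]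
    {ι : Type*} [DecidableEq ι] (ν0 : E) (z : ι → E) (T : Finset ι)
    (h : ∀ p ∈ T, ∃ v, ⟪ν0, v⟫ = 0 ∧ ⟪z p, v⟫ ≠ 0) :
    ∃ u, ⟪ν0, u⟫ = 0 ∧ ∀ p ∈ T, ⟪z p, u⟫ ≠ 0 := by
  induction T using Finset.induction_on with
  | empty => exact ⟨0, inner_zero_right _, by simp⟩
  | @insert q T' hq ih =>
    obtain ⟨u, hu0, hu⟩ := ih (fun p hp => h p (Finset.mem_insert_of_mem hp))
    obtain ⟨v, hv0, hv⟩ := h q (Finset.mem_insert_self _ _)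
    by_cases hqu : ⟪z q, u⟫ ≠ 0
    · refine ⟨u, hu0, fun p hp => ?_⟩
      rcases Finset.mem_insert.1 hp with rfl | hp'
      · exact hqu
      · exact hu p hp'
    · push_neg at hqu
      have hrw : ∀ (p : ι) (t : ℝ), ⟪z p, u + t • v⟫ = ⟪z p, u⟫ + t * ⟪z p, v⟫ := by
        intro p t; rw [inner_add_right, real_inner_smul_right]
      have hev : ∀ᶠ t : ℝ in 𝓝[>] 0, ∀ p ∈ insert q T', ⟪z p, u + t • v⟫ ≠ 0 := by
        rw [Filter.eventually_all_finset]
        intro p hp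
        rcases Finset.mem_insert.1 hp with rfl | hp'
        · filter_upwards [self_mem_nhdsWithin] with t ht
          rw [hrw, hqu, zero_add]
          exact mul_ne_zero (ne_of_gt ht) hv
        · have hcont : Tendsto (fun t : ℝ => ⟪z p, u⟫ + t * ⟪z p, v⟫) (𝓝 0)
              (𝓝 (⟪z p, u⟫)) := by
            have hC : Continuous (fun t : ℝ => ⟪z p, u⟫ + t * ⟪z p, v⟫) := continuous_const.add (continuous_id.mul continuous_const)
            simpa using hC.tendsto 0
          have h2 := hcont.eventually_ne (hu p hp')
          filter_upwards [h2.filter_mono nhdsWithin_le_nhds] with t ht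
          rw [hrw]; exact ht
      obtain ⟨t, ht⟩ := hev.exists
      exact ⟨u + t • v, by rw [inner_add_right, real_inner_smul_right, hu0, hv0]; ring, ht⟩

/-- A full-dimensional convex polyhedral cone with standard description that is not
non-obtuse possesses an obtuse ridge: a point `w ∈ Z` whose active set is exactly a
pair `{i₁, i₂}` with `⟨ν_{i₁}, ν_{i₂}⟩ > 0`. -/
theorem stmt14 {d : ℕ} {I : Type*} [Fintype I]
    (ν : I → EuclideanSpace ℝ (Fin d)) (hν : ∀ i, ‖ν i‖ = 1)
    (Z : Set (EuclideanSpace ℝ (Fin d)))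
    (hZ : Z = {x | ∀ i, (inner ℝ (ν i) x : ℝ) ≤ 0})
    (hfull : (interior Z).Nonempty)
    (hstd : ∀ i, ∃ x ∈ Z, (inner ℝ (ν i) x : ℝ) = 0 ∧
      ∀ j, j ≠ i → (inner ℝ (ν j) x : ℝ) < 0)
    (hnotobtuse : ∃ i j, i ≠ j ∧ (0 : ℝ) < inner ℝ (ν i) (ν j)) :
    ∃ w ∈ Z, ∃ i₁ i₂ : I, i₁ ≠ i₂ ∧ (0 : ℝ) < inner ℝ (ν i₁) (ν i₂) ∧
      {i : I | (inner ℝ (ν i) w : ℝ) = 0} = {i₁, i₂} := by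
  classical
  subst hZ
  choose xp hxpZ hxp0 hxpneg using hstd
  obtain ⟨i, j, hij, hc⟩ := hnotobtuse
  by_cases hcase : ∃ k, k ≠ i ∧ (0 : ℝ) < ⟪ν i, ν k⟫ ∧
      ∃ w, (∀ l, ⟪ν l, w⟫ ≤ 0) ∧ {l | ⟪ν l, w⟫ = 0} = {i, k}
  · obtain ⟨k, hki, hpos, w, hwZ, hact⟩ := hcase
    exact ⟨w, hwZ, i, k, Ne.symm hki, hpos, hact⟩
  · -- Case 2 : all facets adjacent to `i` are non-obtuse with `i`.
    have hAdjNeg : ∀ k, k ≠ i →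
        (∃ w, (∀ l, ⟪ν l, w⟫ ≤ 0) ∧ {l | ⟪ν l, w⟫ = 0} = {i, k}) →
        ⟪ν i, ν k⟫ ≤ 0 := by
      intro k hk hw
      by_contra hlt
      push_neg at hlt
      exact hcase ⟨k, hk, hlt, hw⟩
    set xi := xp i with hxidef
    set xj := xp j with hxjdef
    set a : ℝ := ⟪ν i, xj⟫ with hadef
    have ha : a < 0 := hxpneg j i hij
    have hii : ⟪ν i, ν i⟫ = 1 := by
      rw [real_inner_self_eq_norm_mul_norm, hν i]; norm_num
    set x : EuclideanSpace ℝ (Fin d) := xj - a • ν i with hxdef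
    have hexpx : ∀ v : EuclideanSpace ℝ (Fin d), ⟪v, x⟫ = ⟪v, xj⟫ - a * ⟪v, ν i⟫ := by
      intro v; rw [hxdef, inner_sub_right, real_inner_smul_right]
    have hxHi : ⟪ν i, x⟫ = 0 := by rw [hexpx, hii, hadef]; ring
    have hxj0 : 0 < ⟪ν j, x⟫ := by
      have h1 : ⟪ν j, xj⟫ = 0 := hxp0 j
      have h2 : ⟪ν j, ν i⟫ = ⟪ν i, ν j⟫ := real_inner_comm _ _
      have h3 := mul_neg_of_neg_of_pos ha hc
      rw [hexpx, h1, h2]; linarith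
    have hxbase : ∀ k, k ≠ i →
        (∃ w, (∀ l, ⟪ν l, w⟫ ≤ 0) ∧ {l | ⟪ν l, w⟫ = 0} = {i, k}) →
        ⟪ν k, x⟫ < 0 := by
      intro k hk hadj
      have hik : ⟪ν i, ν k⟫ ≤ 0 := hAdjNeg k hk hadj
      have hkj : k ≠ j := by
        rintro rfl
        exact absurd hik (not_le.mpr hc)
      have h1 : ⟪ν k, xj⟫ < 0 := hxpneg j k hkj
      have h2 : ⟪ν k, ν i⟫ ≤ 0 := by rw [real_inner_comm]; exact hik
      have h3 : 0 ≤ a * ⟪ν k, ν i⟫ := by nlinarith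
      rw [hexpx]; linarith
    -- the "tie-breaking" vectors
    set z : I × I → EuclideanSpace ℝ (Fin d) :=
      fun p => (⟪ν p.1, xi⟫) • ν p.2 - (⟪ν p.2, xi⟫) • ν p.1 with hzdef
    have hzexp : ∀ (p : I × I) (y : EuclideanSpace ℝ (Fin d)),
        ⟪z p, y⟫ = ⟪ν p.1, xi⟫ * ⟪ν p.2, y⟫ - ⟪ν p.2, xi⟫ * ⟪ν p.1, y⟫ := by
      intro p y
      rw [hzdef]
      rw [inner_sub_left, real_inner_smul_left, real_inner_smul_left]
    have hz : ∀ p : I × I, p.1 ≠ i → p.2 ≠ i → p.1 ≠ p.2 →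
        ∃ v, ⟪ν i, v⟫ = 0 ∧ ⟪z p, v⟫ ≠ 0 := by
      rintro ⟨m, m'⟩ hmi hm'i hmm'
      simp only at hmi hm'i hmm'
      set lam : ℝ := ⟪ν i, z (m, m')⟫ with hlamdef
      set v : EuclideanSpace ℝ (Fin d) := z (m, m') - lam • ν i with hvdef
      have hvi : ⟪ν i, v⟫ = 0 := by
        rw [hvdef, inner_sub_right, real_inner_smul_right, hii, hlamdef]; ring
      refine ⟨v, hvi, fun h0 => ?_⟩
      have hvv : ⟪v, v⟫ = 0 := by
        have : ⟪v, v⟫ = ⟪z (m, m'), v⟫ - lam * ⟪ν i, v⟫ := by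
          rw [hvdef]
          conv_lhs => rw [inner_sub_left, real_inner_smul_left]
        rw [this, h0, hvi]; ring
      have hv0 : v = 0 := inner_self_eq_zero.mp hvv
      have hZv : z (m, m') = lam • ν i := by
        have := sub_eq_zero.mp (by rw [← hvdef]; exact hv0)
        exact this
      -- evaluate at xp m'
      have hgm' : ⟪ν m', xi⟫ < 0 := hxpneg i m' hm'i
      have hgm : ⟪ν m, xi⟫ < 0 := hxpneg i m hmi
      have e1 : ⟪z (m, m'), xp m'⟫ = -(⟪ν m', xi⟫ * ⟪ν m, xp m'⟫) := by
        rw [hzexp, hxp0 m']; ring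
      have e1neg : ⟪z (m, m'), xp m'⟫ < 0 := by
        have := mul_pos_of_neg_of_neg hgm' (hxpneg m' m hmm')
        rw [e1]; linarith
      have e2 : ⟪z (m, m'), xp m'⟫ = lam * ⟪ν i, xp m'⟫ := by
        rw [hZv, real_inner_smul_left]
      have h3 : ⟪ν i, xp m'⟫ < 0 := hxpneg m' i (Ne.symm hm'i)
      have hlampos : 0 < lam := by
        by_contra hle
        push_neg at hle
        have : 0 ≤ lam * ⟪ν i, xp m'⟫ := by nlinarith
        rw [e2] at e1neg; linarith
      have f1 : ⟪z (m, m'), xp m⟫ = ⟪ν m, xi⟫ * ⟪ν m', xp m⟫ := by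
        rw [hzexp, hxp0 m]; ring
      have f1pos : 0 < ⟪z (m, m'), xp m⟫ := by
        rw [f1]; exact mul_pos_of_neg_of_neg hgm (hxpneg m m' (Ne.symm hmm'))
      have f2 : ⟪z (m, m'), xp m⟫ = lam * ⟪ν i, xp m⟫ := by
        rw [hZv, real_inner_smul_left]
      have h4 : ⟪ν i, xp m⟫ < 0 := hxpneg m i (Ne.symm hmi)
      have := mul_neg_of_pos_of_neg hlampos h4
      rw [f2] at f1pos; linarith
    set T : Finset (I × I) :=
      Finset.univ.filter (fun p : I × I => p.1 ≠ i ∧ p.2 ≠ i ∧ p.1 ≠ p.2) with hTdef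
    obtain ⟨u, hu0, hu⟩ := aux_dir (ν i) z T (fun p hp => by
      obtain ⟨h1, h2, h3⟩ := (Finset.mem_filter.mp hp).2
      exact hz p h1 h2 h3)
    -- choose the perturbation parameter t
    have hexp : ∀ (v : EuclideanSpace ℝ (Fin d)) (t : ℝ),
        ⟪v, x + t • u⟫ = ⟪v, x⟫ + t * ⟪v, u⟫ := by
      intro v t; rw [inner_add_right, real_inner_smul_right]
    have E1 : ∀ᶠ t : ℝ in 𝓝[>] 0, ∀ k, k ≠ i →
        (∃ w, (∀ l, ⟪ν l, w⟫ ≤ 0) ∧ {l | ⟪ν l, w⟫ = 0} = {i, k}) →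
        ⟪ν k, x + t • u⟫ < 0 := by
      rw [Filter.eventually_all]
      intro k
      by_cases hk : k ≠ i ∧ ∃ w, (∀ l, ⟪ν l, w⟫ ≤ 0) ∧ {l | ⟪ν l, w⟫ = 0} = {i, k}
      · have hbase := hxbase k hk.1 hk.2
        have hcont : Tendsto (fun t : ℝ => ⟪ν k, x⟫ + t * ⟪ν k, u⟫) (𝓝 0)
            (𝓝 (⟪ν k, x⟫)) := by
          have hC : Continuous (fun t : ℝ => ⟪ν k, x⟫ + t * ⟪ν k, u⟫) := continuous_const.add (continuous_id.mul continuous_const)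
          simpa using hC.tendsto 0
        have h2 := hcont.eventually_lt_const hbase
        filter_upwards [h2.filter_mono nhdsWithin_le_nhds] with t ht _ _
        rw [hexp]; exact ht
      · refine Filter.Eventually.of_forall (fun t h1 h2 => ?_)
        exact absurd ⟨h1, h2⟩ hk
    have E2 : ∀ᶠ t : ℝ in 𝓝[>] 0, 0 < ⟪ν j, x + t • u⟫ := by
      have hcont : Tendsto (fun t : ℝ => ⟪ν j, x⟫ + t * ⟪ν j, u⟫) (𝓝 0)
          (𝓝 (⟪ν j, x⟫)) := by
        have hC : Continuous (fun t : ℝ => ⟪ν j, x⟫ + t * ⟪ν j, u⟫) := continuous_const.add (continuous_id.mul continuous_const)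
        simpa using hC.tendsto 0
      have h2 := hcont.eventually_const_lt hxj0
      filter_upwards [h2.filter_mono nhdsWithin_le_nhds] with t ht
      rw [hexp]; exact ht
    have E3 : ∀ᶠ t : ℝ in 𝓝[>] 0, ∀ p : I × I, p ∈ T → ⟪z p, x + t • u⟫ ≠ 0 := by
      rw [Filter.eventually_all]
      intro p
      by_cases hp : p ∈ T
      · have hslope := hu p hp
        by_cases hb : ⟪z p, x⟫ = 0
        · filter_upwards [self_mem_nhdsWithin] with t ht _
          rw [hexp, hb, zero_add]
          exact mul_ne_zero (ne_of_gt ht) hslope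
        · have hcont : Tendsto (fun t : ℝ => ⟪z p, x⟫ + t * ⟪z p, u⟫) (𝓝 0)
              (𝓝 (⟪z p, x⟫)) := by
            have hC : Continuous (fun t : ℝ => ⟪z p, x⟫ + t * ⟪z p, u⟫) := continuous_const.add (continuous_id.mul continuous_const)
            simpa using hC.tendsto 0
          have h2 := hcont.eventually_ne hb
          filter_upwards [h2.filter_mono nhdsWithin_le_nhds] with t ht _
          rw [hexp]; exact ht
      · exact Filter.Eventually.of_forall (fun t hmem => absurd hmem hp)
    obtain ⟨t, hE1, hE2, hE3⟩ := (E1.and (E2.and E3)).exists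
    set x' : EuclideanSpace ℝ (Fin d) := x + t • u with hx'def
    have hx'i : ⟪ν i, x'⟫ = 0 := by rw [hx'def, hexp, hxHi, hu0]; ring
    set g : I → ℝ := fun l => ⟪ν l, xi⟫ with hgdef
    set h' : I → ℝ := fun l => ⟪ν l, x'⟫ with hh'def
    have hgi : g i = 0 := hxp0 i
    have hgneg : ∀ l, l ≠ i → g l < 0 := fun l hl => hxpneg i l hl
    have hh'i : h' i = 0 := hx'i
    have hh'j : 0 < h' j := hE2
    have hcond1 : ∀ k, k ≠ i →
        (∃ w, (∀ l, ⟪ν l, w⟫ ≤ 0) ∧ {l | ⟪ν l, w⟫ = 0} = {i, k}) → h' k < 0 :=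
      fun k hk hadj => hE1 k hk hadj
    have hcond3 : ∀ m m', m ≠ i → m' ≠ i → m ≠ m' → g m * h' m' ≠ g m' * h' m := by
      intro m m' h1 h2 h3 heq
      have hmem : (m, m') ∈ T := by
        rw [hTdef, Finset.mem_filter]
        exact ⟨Finset.mem_univ _, h1, h2, h3⟩
      apply hE3 (m, m') hmem
      rw [hzexp]
      simp only [hgdef, hh'def] at heq
      simp only []
      linarith
    set B : Finset I := Finset.univ.filter (fun m => 0 < h' m) with hBdef
    have hjB : j ∈ B := by rw [hBdef, Finset.mem_filter]; exact ⟨Finset.mem_univ _, hh'j⟩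
    have hBne : B.Nonempty := ⟨j, hjB⟩
    have hBpos : ∀ l ∈ B, 0 < h' l := fun l hl => (Finset.mem_filter.mp hl).2
    have hBi : ∀ l ∈ B, l ≠ i := by
      intro l hl he
      have h1 := hBpos l hl
      rw [he, hh'i] at h1
      exact lt_irrefl 0 h1
    have hgB : ∀ l ∈ B, g l < 0 := fun l hl => hgneg l (hBi l hl)
    have hden : ∀ l ∈ B, g l - h' l < 0 := by
      intro l hl
      have h1 := hBpos l hl
      have h2 := hgB l hl
      linarith
    set tm : I → ℝ := fun m => g m / (g m - h' m) with htmdef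
    set ts : ℝ := B.inf' hBne tm with htsdef
    obtain ⟨m, hmB, hm⟩ := Finset.exists_mem_eq_inf' hBne tm
    rw [← htsdef] at hm
    have hts_le : ∀ l ∈ B, ts ≤ tm l := fun l hl => Finset.inf'_le tm hl
    have keyzero : ∀ l ∈ B, g l + tm l * (h' l - g l) = 0 := by
      intro l hl
      have h1 : g l - h' l ≠ 0 := ne_of_lt (hden l hl)
      simp only [htmdef]
      field_simp
      ring
    have hts_pos : 0 < ts := by
      rw [hm]
      have h1 := hgB m hmB
      have h2 := hden m hmB
      simp only [htmdef]
      exact div_pos_iff.mpr (Or.inr ⟨h1, h2⟩)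
    have hts1 : ts < 1 := by
      rw [hm]
      have h1 := hBpos m hmB
      have h2 := hden m hmB
      have h3 := hgB m hmB
      have k0 := keyzero m hmB
      have hD : 0 < h' m - g m := by linarith
      have hlt1 : tm m * (h' m - g m) < 1 * (h' m - g m) := by linarith
      exact lt_of_mul_lt_mul_right hlt1 hD.le
    set w : EuclideanSpace ℝ (Fin d) := xi + ts • (x' - xi) with hwdef
    have hφ : ∀ l, ⟪ν l, w⟫ = g l + ts * (h' l - g l) := by
      intro l
      rw [hwdef, inner_add_right, real_inner_smul_right, inner_sub_right]
    have hwi : ⟪ν i, w⟫ = 0 := by rw [hφ i, hgi, hh'i]; ring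
    have hwm : ⟪ν m, w⟫ = 0 := by rw [hφ m, hm]; exact keyzero m hmB
    have hlt : ∀ l ∈ B, l ≠ m → ts < tm l := by
      intro l hl hlm
      refine lt_of_le_of_ne (hts_le l hl) ?_
      rw [hm]
      intro heq
      have hd1 := hden m hmB
      have hd2 := hden l hl
      simp only [htmdef] at heq
      rw [div_eq_div_iff (ne_of_lt hd1) (ne_of_lt hd2)] at heq
      have hkey : g m * h' l = g l * h' m := by linear_combination -heq
      exact hcond3 m l (hBi m hmB) (hBi l hl) hlm.symm hkey
    have hneg1 : ∀ l ∈ B, l ≠ m → ⟪ν l, w⟫ < 0 := by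
      intro l hl hlm
      have k0 := keyzero l hl
      have h1 := hlt l hl hlm
      have h2 : 0 < h' l - g l := by
        have := hBpos l hl
        have := hgB l hl
        linarith
      have h3 := mul_lt_mul_of_pos_right h1 h2
      rw [hφ l]
      linarith
    have hneg2 : ∀ l, l ∉ B → l ≠ i → ⟪ν l, w⟫ < 0 := by
      intro l hl hli
      have h1 : ¬ 0 < h' l := by
        intro hpos
        exact hl (Finset.mem_filter.mpr ⟨Finset.mem_univ _, hpos⟩)
      push_neg at h1
      have h2 := hgneg l hli
      have e : g l + ts * (h' l - g l) = (1 - ts) * g l + ts * h' l := by ring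
      have e1 : (1 - ts) * g l < 0 := mul_neg_of_pos_of_neg (by linarith) h2
      have e2 : 0 ≤ ts * (-h' l) := mul_nonneg hts_pos.le (by linarith)
      rw [hφ l]
      linarith
    have hwZ : ∀ l, ⟪ν l, w⟫ ≤ 0 := by
      intro l
      by_cases h1 : l = i
      · exact le_of_eq (by rw [h1, hwi])
      · by_cases h2 : l = m
        · exact le_of_eq (by rw [h2, hwm])
        · by_cases h3 : l ∈ B
          · exact (hneg1 l h3 h2).le
          · exact (hneg2 l h3 h1).le
    have hact : {l | ⟪ν l, w⟫ = 0} = {i, m} := by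
      ext l
      simp only [Set.mem_setOf_eq, Set.mem_insert_iff, Set.mem_singleton_iff]
      constructor
      · intro h0
        by_contra hcon
        push_neg at hcon
        obtain ⟨hli, hlm⟩ := hcon
        by_cases h3 : l ∈ B
        · exact (ne_of_lt (hneg1 l h3 hlm)) h0
        · exact (ne_of_lt (hneg2 l h3 hli)) h0
      · rintro (rfl | rfl)
        · exact hwi
        · exact hwm
    have hmi : m ≠ i := hBi m hmB
    have hfin := hcond1 m hmi ⟨w, hwZ, hact⟩
    exact absurd (hBpos m hmB) (not_lt.mpr hfin.le)
end
end

section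
/- Let Z ⊂ ℝ^d be a full-dimensional convex polyhedron with standard description {(ν_i, α_i)}_{i∈I}. Then Z is non-obtuse (⟨ν_i, ν_j⟩ ≤ 0 for all i ≠ j) if and only if Z has only non-obtuse ridges, i.e., for all x ∈ Z whose active set 𝒜(x) equals a two-element set {i₁, i₂}, it holds ⟨ν_{i₁}, ν_{i₂}⟩ ≤ 0. -/
open Metric Set

noncomputable section

lemma avoid_aux {E : Type*} [AddCommGroup E] [Module ℝ E] {ι : Type*} [DecidableEq ι]
    (J : Finset ι) (g : ι → E → ℝ) (γ : ι → ℝ) (s : Set E)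
    (hs : Convex ℝ s) (hne : s.Nonempty)
    (haff : ∀ i (t : ℝ) (z₁ z₂ : E), g i ((1-t) • z₁ + t • z₂) = (1-t) * g i z₁ + t * g i z₂)
    (hnc : ∀ i ∈ J, ∃ z₁ ∈ s, ∃ z₂ ∈ s, g i z₁ ≠ g i z₂) :
    ∃ z ∈ s, ∀ i ∈ J, g i z ≠ γ i := by
  classical
  induction J using Finset.induction with
  | empty => exact ⟨hne.some, hne.some_mem, by simp⟩
  | @insert i J hiJ IH =>
    obtain ⟨z, hz, hzJ⟩ := IH (fun j hj => hnc j (Finset.mem_insert_of_mem hj))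
    by_cases hzi : g i z ≠ γ i
    · refine ⟨z, hz, ?_⟩
      intro j hj
      rcases Finset.mem_insert.1 hj with rfl | hj
      · exact hzi
      · exact hzJ j hj
    · push_neg at hzi
      obtain ⟨z₁, hz₁, z₂, hz₂, hdiff⟩ := hnc i (Finset.mem_insert_self i J)
      obtain ⟨z', hz', hdz⟩ : ∃ z' ∈ s, g i z' ≠ g i z := by
        by_cases h1 : g i z₁ = g i z
        · exact ⟨z₂, hz₂, fun h => hdiff (h1.trans h.symm)⟩
        · exact ⟨z₁, hz₁, h1⟩
      set B : Finset ℝ := (insert i J).image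
        (fun j => if g j z' - g j z = 0 then 2 else (γ j - g j z)/(g j z' - g j z)) with hB
      obtain ⟨t, ht⟩ : (Set.Ioc (0:ℝ) 1 \ (B : Set ℝ)).Nonempty :=
        ((Set.Ioc_infinite zero_lt_one).diff B.finite_toSet).nonempty
      obtain ⟨⟨ht0, ht1⟩, htB⟩ := ht
      refine ⟨(1-t) • z + t • z', hs hz hz' (by linarith) (le_of_lt ht0) (by ring), ?_⟩
      intro j hj
      rw [haff]
      intro hcon
      have hval : g j z + t * (g j z' - g j z) = γ j := by linarith
      by_cases hsl : g j z' - g j z = 0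
      · rw [hsl, mul_zero, add_zero] at hval
        rcases Finset.mem_insert.1 hj with rfl | hj
        · exact hdz (by linarith)
        · exact hzJ j hj hval
      · have : t = (γ j - g j z)/(g j z' - g j z) := by
          field_simp
          linarith
        apply htB
        rw [hB]
        simp only [Finset.coe_image, Set.mem_image, Finset.mem_coe]
        exact ⟨j, hj, by rw [if_neg hsl, ← this]⟩

lemma deg_lemma {d : ℕ} {I : Type*} [Fintype I]
    (ν : I → EuclideanSpace ℝ (Fin d)) (α : I → ℝ)
    (hstd : ∀ i, ∃ x ∈ {x : EuclideanSpace ℝ (Fin d) | ∀ i, (inner ℝ (ν i) x : ℝ) ≤ α i},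
      (inner ℝ (ν i) x : ℝ) = α i ∧ ∀ j, j ≠ i → (inner ℝ (ν j) x : ℝ) < α j)
    {i j m : I} (hij : i ≠ j) (him : i ≠ m) (hjm : j ≠ m)
    {y : EuclideanSpace ℝ (Fin d)}
    (hyi : (inner ℝ (ν i) y : ℝ) = α i) (hyj : (inner ℝ (ν j) y : ℝ) = α j)
    (hym : (inner ℝ (ν m) y : ℝ) = α m)
    {p q r : ℝ} (hrel : p • ν i + q • ν j + r • ν m = 0)
    (hnz : ¬(p = 0 ∧ q = 0 ∧ r = 0)) : False := by
  obtain ⟨xi, hxiZ, hxi, hxi'⟩ := hstd i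
  obtain ⟨xj, hxjZ, hxj, hxj'⟩ := hstd j
  obtain ⟨xm, hxmZ, hxm, hxm'⟩ := hstd m
  have key : ∀ z : EuclideanSpace ℝ (Fin d),
      p * (inner ℝ (ν i) z : ℝ) + q * (inner ℝ (ν j) z : ℝ) + r * (inner ℝ (ν m) z : ℝ) = 0 := by
    intro z
    have h0 : (inner ℝ (p • ν i + q • ν j + r • ν m) z : ℝ) = 0 := by rw [hrel, inner_zero_left]
    rw [inner_add_left, inner_add_left, real_inner_smul_left, real_inner_smul_left,
      real_inner_smul_left] at h0
    exact h0
  have hC : p * α i + q * α j + r * α m = 0 := by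
    have := key y; rw [hyi, hyj, hym] at this; exact this
  have e1 : q * ((inner ℝ (ν j) xi : ℝ) - α j) + r * ((inner ℝ (ν m) xi : ℝ) - α m) = 0 := by
    have h := key xi; rw [hxi] at h; linear_combination h - hC
  have e2 : p * ((inner ℝ (ν i) xj : ℝ) - α i) + r * ((inner ℝ (ν m) xj : ℝ) - α m) = 0 := by
    have h := key xj; rw [hxj] at h; linear_combination h - hC
  have e3 : p * ((inner ℝ (ν i) xm : ℝ) - α i) + q * ((inner ℝ (ν j) xm : ℝ) - α j) = 0 := by
    have h := key xm; rw [hxm] at h; linear_combination h - hC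
  have u1 : (inner ℝ (ν j) xi : ℝ) - α j < 0 := sub_neg.2 (hxi' j (Ne.symm hij))
  have v1 : (inner ℝ (ν m) xi : ℝ) - α m < 0 := sub_neg.2 (hxi' m (Ne.symm him))
  have u2 : (inner ℝ (ν i) xj : ℝ) - α i < 0 := sub_neg.2 (hxj' i hij)
  have v2 : (inner ℝ (ν m) xj : ℝ) - α m < 0 := sub_neg.2 (hxj' m (Ne.symm hjm))
  have u3 : (inner ℝ (ν i) xm : ℝ) - α i < 0 := sub_neg.2 (hxm' i him)
  have v3 : (inner ℝ (ν j) xm : ℝ) - α j < 0 := sub_neg.2 (hxm' j hjm)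
  generalize hU1 : (inner ℝ (ν j) xi : ℝ) - α j = U1 at u1 e1
  generalize hV1 : (inner ℝ (ν m) xi : ℝ) - α m = V1 at v1 e1
  generalize hU2 : (inner ℝ (ν i) xj : ℝ) - α i = U2 at u2 e2
  generalize hV2 : (inner ℝ (ν m) xj : ℝ) - α m = V2 at v2 e2
  generalize hU3 : (inner ℝ (ν i) xm : ℝ) - α i = U3 at u3 e3
  generalize hV3 : (inner ℝ (ν j) xm : ℝ) - α j = V3 at v3 e3
  clear hrel key hC hxi hxj hxm hxi' hxj' hxm' hxiZ hxjZ hxmZ hyi hyj hym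
  clear hU1 hV1 hU2 hV2 hU3 hV3 hstd
  clear xi xj xm y ν α
  rcases lt_trichotomy p 0 with hp | hp | hp
  · have hr : 0 < r := by nlinarith
    have hq : 0 < q := by nlinarith
    nlinarith
  · subst hp
    have hr : r = 0 := by
      rcases mul_eq_zero.1 (by linarith : r * V2 = 0) with h | h
      · exact h
      · exact absurd h (ne_of_lt v2)
    have hq : q = 0 := by
      rcases mul_eq_zero.1 (by rw [hr] at e1; linarith : q * U1 = 0) with h | h
      · exact h
      · exact absurd h (ne_of_lt u1)
    exact hnz ⟨rfl, hq, hr⟩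
  · have hr : r < 0 := by nlinarith
    have hq : q < 0 := by nlinarith
    nlinarith

/-- Equivalence of local and global non-obtuseness for a full-dimensional convex
polyhedron with standard description: all pairwise inner ℝ products of the normals are
nonpositive iff every ridge (point with exactly two active constraints) is non-obtuse. -/
theorem stmt15 {d : ℕ} {I : Type*} [Fintype I]
    (ν : I → EuclideanSpace ℝ (Fin d)) (α : I → ℝ) (hν : ∀ i, ‖ν i‖ = 1)
    (Z : Set (EuclideanSpace ℝ (Fin d)))
    (hZ : Z = {x | ∀ i, (inner ℝ (ν i) x : ℝ) ≤ α i})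
    (hfull : (interior Z).Nonempty)
    (hstd : ∀ i, ∃ x ∈ Z, (inner ℝ (ν i) x : ℝ) = α i ∧
      ∀ j, j ≠ i → (inner ℝ (ν j) x : ℝ) < α j) :
    (∀ i j, i ≠ j → (inner ℝ (ν i) (ν j) : ℝ) ≤ 0) ↔
      (∀ x ∈ Z, ∀ i₁ i₂ : I, i₁ ≠ i₂ →
        {i : I | (inner ℝ (ν i) x : ℝ) = α i} = {i₁, i₂} →
        (inner ℝ (ν i₁) (ν i₂) : ℝ) ≤ 0) := by
  classical
  subst hZ
  constructor
  · intro h x _ i₁ i₂ hne _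
    exact h i₁ i₂ hne
  · intro R a b hab
    by_contra hc
    push_neg at hc
    -- hc : 0 < ⟪ν a, ν b⟫
    obtain ⟨xb, hxbZ, hxb, hxb'⟩ := hstd b
    have hδ : 0 < α a - (inner ℝ (ν a) xb : ℝ) := sub_pos.2 (hxb' a hab)
    set δ : ℝ := α a - (inner ℝ (ν a) xb : ℝ) with hδdef
    set x : EuclideanSpace ℝ (Fin d) := xb + δ • ν a with hxdef
    have hνaa : (inner ℝ (ν a) (ν a) : ℝ) = 1 := by
      rw [real_inner_self_eq_norm_sq, hν a]; norm_num
    have hxa_eq : (inner ℝ (ν a) x : ℝ) = α a := by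
      rw [hxdef, inner_add_right, real_inner_smul_right, hνaa]; rw [hδdef]; ring
    have hxb_gt : α b < (inner ℝ (ν b) x : ℝ) := by
      rw [hxdef, inner_add_right, real_inner_smul_right, hxb]
      have : (inner ℝ (ν b) (ν a) : ℝ) = inner ℝ (ν a) (ν b) := real_inner_comm _ _
      rw [this]
      nlinarith
    have hxZ : x ∉ {x : EuclideanSpace ℝ (Fin d) | ∀ i, (inner ℝ (ν i) x : ℝ) ≤ α i} := by
      intro h
      exact absurd (h b) (not_le.2 hxb_gt)
    obtain ⟨xa, hxaZ, hxa, hxa'⟩ := hstd a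
    -- the "relatively open facet-a slab"
    set s : Set (EuclideanSpace ℝ (Fin d)) :=
      {z | (inner ℝ (ν a) z : ℝ) = α a ∧ ∀ k, k ≠ a → (inner ℝ (ν k) z : ℝ) < α k} with hsdef
    have hxas : xa ∈ s := ⟨hxa, hxa'⟩
    have hscon : Convex ℝ s := by
      intro z1 hz1 z2 hz2 p q hp hq hpq
      constructor
      · rw [inner_add_right, real_inner_smul_right, real_inner_smul_right, hz1.1, hz2.1]
        linear_combination α a * hpq
      · intro k hk
        rw [inner_add_right, real_inner_smul_right, real_inner_smul_right]
        have h1 := hz1.2 k hk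
        have h2 := hz2.2 k hk
        have hsum : p * α k + q * α k = α k := by linear_combination α k * hpq
        rcases eq_or_lt_of_le hp with hp0 | hp0
        · have hq1 : q = 1 := by linarith
          rw [← hp0, hq1, zero_mul, one_mul, zero_add]
          exact h2
        · have h1' := mul_lt_mul_of_pos_left h1 hp0
          have h2' := mul_le_mul_of_nonneg_left h2.le hq
          linarith
    have hsZ : s ⊆ {x : EuclideanSpace ℝ (Fin d) | ∀ i, (inner ℝ (ν i) x : ℝ) ≤ α i} := by
      intro z hz i
      by_cases hia : i = a
      · rw [hia]; exact le_of_eq hz.1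
      · exact le_of_lt (hz.2 i hia)
    -- margin at xa
    obtain ⟨k₀, hk₀mem, hk₀min⟩ := Finset.exists_min_image (Finset.univ.erase a)
      (fun k => α k - (inner ℝ (ν k) xa : ℝ))
      ⟨b, Finset.mem_erase.2 ⟨Ne.symm hab, Finset.mem_univ b⟩⟩
    set mval : ℝ := α k₀ - (inner ℝ (ν k₀) xa : ℝ) with hmdef
    have hm : 0 < mval := sub_pos.2 (hxa' k₀ (Finset.mem_erase.1 hk₀mem).1)
    have hmle : ∀ k, k ≠ a → mval ≤ α k - (inner ℝ (ν k) xa : ℝ) := fun k hk =>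
      hk₀min k (Finset.mem_erase.2 ⟨hk, Finset.mem_univ k⟩)
    have hmem_s : ∀ (c : ℝ) (u : EuclideanSpace ℝ (Fin d)),
        (inner ℝ (ν a) u : ℝ) = 0 → |c| * ‖u‖ < mval → xa + c • u ∈ s := by
      intro c u hu hcu
      constructor
      · rw [inner_add_right, real_inner_smul_right, hu, mul_zero, add_zero, hxa]
      · intro k hk
        have h1 : (inner ℝ (ν k) (c • u) : ℝ) ≤ |c| * ‖u‖ := by
          rw [real_inner_smul_right]
          calc c * (inner ℝ (ν k) u : ℝ) ≤ |c * (inner ℝ (ν k) u : ℝ)| := le_abs_self _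
            _ = |c| * |(inner ℝ (ν k) u : ℝ)| := abs_mul _ _
            _ ≤ |c| * (‖ν k‖ * ‖u‖) := by
                apply mul_le_mul_of_nonneg_left (abs_real_inner_le_norm _ _) (abs_nonneg c)
            _ = |c| * ‖u‖ := by rw [hν k, one_mul]
        rw [inner_add_right]
        have := hmle k hk
        linarith
    -- pair predicate and separating functionals
    set P : I × I → Prop := fun pr => pr.1 ≠ pr.2 ∧ pr.1 ≠ a ∧ pr.2 ≠ a ∧
      ∃ y : EuclideanSpace ℝ (Fin d), (inner ℝ (ν a) y : ℝ) = α a ∧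
        (inner ℝ (ν pr.1) y : ℝ) = α pr.1 ∧ (inner ℝ (ν pr.2) y : ℝ) = α pr.2 with hPdef
    have hpair : ∀ pr : I × I, ∃ (w : EuclideanSpace ℝ (Fin d)) (γ : ℝ), P pr →
        ((inner ℝ w x : ℝ) = γ ∧
          (∀ z : EuclideanSpace ℝ (Fin d), (inner ℝ (ν a) z : ℝ) = α a →
            (inner ℝ (ν pr.1) z : ℝ) = α pr.1 → (inner ℝ (ν pr.2) z : ℝ) = α pr.2 →
            (inner ℝ w z : ℝ) = γ) ∧
          w - (inner ℝ w (ν a) : ℝ) • ν a ≠ 0) := by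
      rintro ⟨k, l⟩
      by_cases hg : P (k, l)
      swap
      · exact ⟨0, 0, fun h => absurd h hg⟩
      obtain ⟨hkl, hka, hla, y₀, hy0a, hy0k, hy0l⟩ := hg
      simp only at hkl hka hla hy0k hy0l
      set vK : ℝ := (inner ℝ (ν k) x : ℝ) - α k with hvK
      set vL : ℝ := (inner ℝ (ν l) x : ℝ) - α l with hvL
      by_cases hv : vK = 0 ∧ vL = 0
      · refine ⟨ν k, α k, fun _ => ⟨by rw [hvK] at hv; linarith [hv.1], fun z _ hzk _ => hzk, ?_⟩⟩
        intro h0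
        rw [sub_eq_zero] at h0
        refine deg_lemma ν α hstd (Ne.symm hka) (Ne.symm hla) hkl hy0a hy0k hy0l
          (p := -(inner ℝ (ν k) (ν a) : ℝ)) (q := 1) (r := 0) ?_ (fun h => one_ne_zero h.2.1)
        rw [neg_smul, one_smul, zero_smul, add_zero]
        rw [h0, real_inner_smul_left, hνaa, mul_one]
        abel
      · refine ⟨(-vL) • ν k + vK • ν l, (-vL) * α k + vK * α l, fun _ => ⟨?_, ?_, ?_⟩⟩
        · rw [inner_add_left, real_inner_smul_left, real_inner_smul_left]
          have h1 : (inner ℝ (ν k) x : ℝ) = α k + vK := by rw [hvK]; ring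
          have h2 : (inner ℝ (ν l) x : ℝ) = α l + vL := by rw [hvL]; ring
          rw [h1, h2]; ring
        · intro z _ hzk hzl
          rw [inner_add_left, real_inner_smul_left, real_inner_smul_left, hzk, hzl]
        · intro h0
          rw [sub_eq_zero] at h0
          refine deg_lemma ν α hstd (Ne.symm hka) (Ne.symm hla) hkl hy0a hy0k hy0l
            (p := -(inner ℝ ((-vL) • ν k + vK • ν l) (ν a) : ℝ)) (q := -vL) (r := vK) ?_ ?_
          · rw [neg_smul, ← h0]
            abel
          · intro h
            exact hv ⟨h.2.2, neg_eq_zero.1 h.2.1⟩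
    choose w γ hw using hpair
    set J : Finset (I × I) := Finset.univ.filter P with hJdef
    have haff : ∀ (pr : I × I) (t : ℝ) (z₁ z₂ : EuclideanSpace ℝ (Fin d)),
        (inner ℝ (w pr) ((1-t) • z₁ + t • z₂) : ℝ) =
          (1-t) * (inner ℝ (w pr) z₁ : ℝ) + t * (inner ℝ (w pr) z₂ : ℝ) := by
      intro pr t z₁ z₂
      rw [inner_add_right, real_inner_smul_right, real_inner_smul_right]
    have hnc : ∀ pr ∈ J, ∃ z₁ ∈ s, ∃ z₂ ∈ s,
        (inner ℝ (w pr) z₁ : ℝ) ≠ (inner ℝ (w pr) z₂ : ℝ) := by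
      intro pr hpr
      have hPpr : P pr := (Finset.mem_filter.1 hpr).2
      obtain ⟨-, -, hu⟩ := hw pr hPpr
      set τ : ℝ := (inner ℝ (w pr) (ν a) : ℝ) with hτ
      set u : EuclideanSpace ℝ (Fin d) := w pr - τ • ν a with hudef
      have hu0 : u ≠ 0 := hu
      have hua : (inner ℝ (ν a) u : ℝ) = 0 := by
        rw [hudef, inner_sub_right, real_inner_smul_right, hνaa, mul_one,
          real_inner_comm, ← hτ, sub_self]
      have hwu : (inner ℝ (w pr) u : ℝ) = (inner ℝ u u : ℝ) := by
        have h2 : w pr = u + τ • ν a := by rw [hudef]; abel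
        calc (inner ℝ (w pr) u : ℝ) = (inner ℝ (u + τ • ν a) u : ℝ) := by rw [← h2]
          _ = (inner ℝ u u : ℝ) + τ * (inner ℝ (ν a) u : ℝ) := by
              rw [inner_add_left, real_inner_smul_left]
          _ = (inner ℝ u u : ℝ) := by rw [hua, mul_zero, add_zero]
      have huu : (0:ℝ) < (inner ℝ u u : ℝ) := by
        rw [real_inner_self_eq_norm_sq]
        exact pow_pos (norm_pos_iff.mpr hu0) 2
      set t₀ : ℝ := mval / (2 * (‖u‖ + 1)) with ht₀
      have hden : (0:ℝ) < 2 * (‖u‖ + 1) := by positivity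
      have ht₀pos : 0 < t₀ := div_pos hm hden
      have hbound : t₀ * ‖u‖ < mval := by
        rw [ht₀, div_mul_eq_mul_div, div_lt_iff₀ hden]
        nlinarith [norm_nonneg u, hm]
      have hz₁ : xa + t₀ • u ∈ s := by
        apply hmem_s _ _ hua
        rw [abs_of_pos ht₀pos]
        exact hbound
      have hz₂ : xa + (-t₀) • u ∈ s := by
        apply hmem_s _ _ hua
        rw [abs_neg, abs_of_pos ht₀pos]
        exact hbound
      refine ⟨_, hz₁, _, hz₂, ?_⟩
      rw [inner_add_right, inner_add_right, real_inner_smul_right, real_inner_smul_right, hwu]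
      intro hcon
      have : (2 * t₀) * (inner ℝ u u : ℝ) = 0 := by linarith
      rcases mul_eq_zero.1 this with h | h
      · linarith
      · linarith
    obtain ⟨xa', hxa's, hxa'good⟩ := avoid_aux J (fun pr z => (inner ℝ (w pr) z : ℝ)) γ s
      hscon ⟨xa, hxas⟩ haff hnc
    -- the segment from xa' to x
    set v : EuclideanSpace ℝ (Fin d) := x - xa' with hvdef
    set zf : ℝ → EuclideanSpace ℝ (Fin d) := fun t => xa' + t • v with hzf
    have hz0 : zf 0 = xa' := by rw [hzf]; simp
    have hz1 : zf 1 = x := by rw [hzf]; simp [hvdef]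
    have hva : (inner ℝ (ν a) v : ℝ) = 0 := by
      rw [hvdef, inner_sub_right, hxa_eq, hxa's.1, sub_self]
    have hza : ∀ t, (inner ℝ (ν a) (zf t) : ℝ) = α a := by
      intro t
      rw [hzf]
      simp only
      rw [inner_add_right, real_inner_smul_right, hva, mul_zero, add_zero, hxa's.1]
    have hzin : ∀ (i : I) (t : ℝ),
        (inner ℝ (ν i) (zf t) : ℝ) = (inner ℝ (ν i) xa' : ℝ) + t * (inner ℝ (ν i) v : ℝ) := by
      intro i t
      rw [hzf]
      simp only
      rw [inner_add_right, real_inner_smul_right]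
    set S : Set ℝ := {t | t ∈ Set.Icc (0:ℝ) 1 ∧
      zf t ∈ {x : EuclideanSpace ℝ (Fin d) | ∀ i, (inner ℝ (ν i) x : ℝ) ≤ α i}} with hSdef
    have h0S : (0:ℝ) ∈ S := ⟨⟨le_refl 0, zero_le_one⟩, by rw [hz0]; exact hsZ hxa's⟩
    have hSbdd : BddAbove S := ⟨1, fun t ht => ht.1.2⟩
    have hScl : IsClosed S := by
      have hZc : IsClosed {x : EuclideanSpace ℝ (Fin d) | ∀ i, (inner ℝ (ν i) x : ℝ) ≤ α i} := by
        have : {x : EuclideanSpace ℝ (Fin d) | ∀ i, (inner ℝ (ν i) x : ℝ) ≤ α i} =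
            ⋂ i, {x : EuclideanSpace ℝ (Fin d) | (inner ℝ (ν i) x : ℝ) ≤ α i} := by
          ext z; simp
        rw [this]
        exact isClosed_iInter fun i =>
          isClosed_le (Continuous.inner continuous_const continuous_id) continuous_const
      have hzc : Continuous zf := by
        rw [hzf]
        exact continuous_const.add (continuous_id.smul continuous_const)
      have : S = Set.Icc (0:ℝ) 1 ∩ zf ⁻¹' {x : EuclideanSpace ℝ (Fin d) |
          ∀ i, (inner ℝ (ν i) x : ℝ) ≤ α i} := by
        ext t; simp [hSdef, Set.mem_preimage]
      rw [this]
      exact isClosed_Icc.inter (hZc.preimage hzc)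
    set T : ℝ := sSup S with hTdef
    have hTS : T ∈ S := hScl.csSup_mem ⟨0, h0S⟩ hSbdd
    have hT0 : 0 ≤ T := le_csSup hSbdd h0S
    have hT1 : T < 1 := by
      rcases lt_or_eq_of_le hTS.1.2 with h | h
      · exact h
      · exfalso
        have := hTS.2
        rw [h, hz1] at this
        exact hxZ this
    set y : EuclideanSpace ℝ (Fin d) := zf T with hydef
    have hyZ : y ∈ {x : EuclideanSpace ℝ (Fin d) | ∀ i, (inner ℝ (ν i) x : ℝ) ≤ α i} := hTS.2
    have hya : (inner ℝ (ν a) y : ℝ) = α a := hza T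
    have hbeyond : ∀ t, T < t → t ≤ 1 → ∃ i, α i < (inner ℝ (ν i) (zf t) : ℝ) := by
      intro t h1 h2
      by_contra hno
      push_neg at hno
      have htS : t ∈ S := ⟨⟨le_trans hT0 (le_of_lt h1), h2⟩, fun i => hno i⟩
      exact absurd (le_csSup hSbdd htS) (not_le.2 h1)
    -- choose a step s₀ beyond T small enough
    set f : I → ℝ := fun i => if (inner ℝ (ν i) y : ℝ) < α i then
      (α i - (inner ℝ (ν i) y : ℝ)) / (|(inner ℝ (ν i) v : ℝ)| + 1) else 1 with hfdef
    have hfpos : ∀ i, 0 < f i := by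
      intro i
      rw [hfdef]
      simp only
      split_ifs with h
      · apply div_pos (by linarith) (by positivity)
      · exact one_pos
    have hIne : (Finset.univ : Finset I).Nonempty := ⟨a, Finset.mem_univ a⟩
    set s₀ : ℝ := min (Finset.univ.inf' hIne f) (1 - T) with hs₀def
    have hs₀pos : 0 < s₀ := by
      apply lt_min
      · exact (Finset.lt_inf'_iff hIne).2 fun i _ => hfpos i
      · linarith
    have hs₀f : ∀ i, s₀ ≤ f i := fun i =>
      le_trans (min_le_left _ _) (Finset.inf'_le f (Finset.mem_univ i))
    set t₀ : ℝ := T + s₀ with ht₀def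
    obtain ⟨k, hk⟩ : ∃ i, α i < (inner ℝ (ν i) (zf t₀) : ℝ) := by
      apply hbeyond
      · linarith
      · have := min_le_right (Finset.univ.inf' hIne f) (1 - T)
        rw [ht₀def]
        linarith [hs₀def ▸ this]
    have hkt₀ : (inner ℝ (ν k) (zf t₀) : ℝ) = (inner ℝ (ν k) y : ℝ) + s₀ * (inner ℝ (ν k) v : ℝ) := by
      rw [hzin k t₀, hydef, hzin k T, ht₀def]
      ring
    have hka : k ≠ a := by
      intro h
      rw [h] at hk
      rw [hza t₀] at hk
      exact lt_irrefl _ hk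
    -- k is active at y
    have hky : (inner ℝ (ν k) y : ℝ) = α k := by
      rcases lt_or_eq_of_le (hyZ k) with hlt | heq
      · exfalso
        have hfk : f k = (α k - (inner ℝ (ν k) y : ℝ)) / (|(inner ℝ (ν k) v : ℝ)| + 1) := by
          rw [hfdef]; simp only; rw [if_pos hlt]
        have h1 : s₀ * (inner ℝ (ν k) v : ℝ) ≤ s₀ * |(inner ℝ (ν k) v : ℝ)| :=
          mul_le_mul_of_nonneg_left (le_abs_self _) (le_of_lt hs₀pos)
        have h2 : s₀ * |(inner ℝ (ν k) v : ℝ)| ≤ f k * |(inner ℝ (ν k) v : ℝ)| :=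
          mul_le_mul_of_nonneg_right (hs₀f k) (abs_nonneg _)
        have h3 : f k * |(inner ℝ (ν k) v : ℝ)| ≤ α k - (inner ℝ (ν k) y : ℝ) := by
          rw [hfk, div_mul_eq_mul_div, div_le_iff₀ (by positivity)]
          apply mul_le_mul_of_nonneg_left _ (by linarith : (0:ℝ) ≤ α k - (inner ℝ (ν k) y : ℝ))
          linarith [abs_nonneg ((inner ℝ (ν k) v : ℝ))]
        rw [hkt₀] at hk
        linarith
      · exact heq
    have hkv : 0 < (inner ℝ (ν k) v : ℝ) := by
      rw [hkt₀, hky] at hk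
      by_contra hcon
      push_neg at hcon
      have := mul_nonpos_of_nonneg_of_nonpos hs₀pos.le hcon
      linarith
    have hkx : α k < (inner ℝ (ν k) x : ℝ) := by
      have : (inner ℝ (ν k) x : ℝ) = (inner ℝ (ν k) y : ℝ) + (1 - T) * (inner ℝ (ν k) v : ℝ) := by
        rw [← hz1, hzin k 1, hydef, hzin k T]
        ring
      rw [this, hky]
      have := mul_pos (by linarith : (0:ℝ) < 1 - T) hkv
      linarith
    -- uniqueness: no third active constraint at y
    have huniq : ∀ l, l ≠ a → l ≠ k → (inner ℝ (ν l) y : ℝ) < α l := by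
      intro l hla hlk
      rcases lt_or_eq_of_le (hyZ l) with hlt | heq
      · exact hlt
      · exfalso
        have hPkl : P (k, l) := ⟨Ne.symm hlk, hka, hla, y, hya, hky, heq⟩
        have hJkl : (k, l) ∈ J := Finset.mem_filter.2 ⟨Finset.mem_univ _, hPkl⟩
        obtain ⟨hwx, hwz, -⟩ := hw (k, l) hPkl
        have hwy : (inner ℝ (w (k, l)) y : ℝ) = γ (k, l) := hwz y hya hky heq
        -- xa' lies on the line through x and y
        have hyx : y - x = (T - 1) • v := by
          rw [hydef, ← hz1, hzf]
          simp only
          rw [sub_smul]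
          abel
        have hrepr : xa' = x + (1 / (1 - T)) • (y - x) := by
          rw [hyx, smul_smul]
          have h1T : (1:ℝ) - T ≠ 0 := by linarith
          have : (1 / (1 - T)) * (T - 1) = -1 := by field_simp; ring
          rw [this, neg_one_smul, hvdef]
          abel
        have : (inner ℝ (w (k, l)) xa' : ℝ) = γ (k, l) := by
          rw [hrepr, inner_add_right, real_inner_smul_right, inner_sub_right, hwy, hwx]
          ring
        exact hxa'good (k, l) hJkl this
    -- active set at y is exactly {a, k}
    have hset : {i : I | (inner ℝ (ν i) y : ℝ) = α i} = {a, k} := by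
      ext i
      simp only [Set.mem_setOf_eq, Set.mem_insert_iff, Set.mem_singleton_iff]
      constructor
      · intro hi
        by_contra hcon
        push_neg at hcon
        exact absurd hi (ne_of_lt (huniq i hcon.1 hcon.2))
      · rintro (rfl | rfl)
        · exact hya
        · exact hky
    have hle := R y hyZ a k (Ne.symm hka) hset
    -- final contradiction
    rcases eq_or_ne k b with rfl | hkb
    · exact absurd hle (not_le.2 hc)
    · have hkxval : (inner ℝ (ν k) x : ℝ) = (inner ℝ (ν k) xb : ℝ) + δ * (inner ℝ (ν a) (ν k) : ℝ) := by
        rw [hxdef, inner_add_right, real_inner_smul_right, real_inner_comm (ν k) (ν a)]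
      have h1 : (inner ℝ (ν k) xb : ℝ) < α k := hxb' k hkb
      have h2 : δ * (inner ℝ (ν a) (ν k) : ℝ) ≤ 0 :=
        mul_nonpos_of_nonneg_of_nonpos hδ.le hle
      rw [hkxval] at hkx
      linarith
end
end
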